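/- arXiv:0806.0541 — 9 statements merged into one kernel-verified Lean document; each statement's English description precedes it below -/
import Mathlib

section
/- Let V be a finite-dimensional real normed vector space, U an open subset of V, and f : U → ℝ a function of class C². Let A : V → V be a linear endomorphism, a ∈ U, and ε > 0 be such that for every real t with |t| < ε one has exp(tA)·a ∈ U and f(exp(tA)·a) = f(a). Then the first derivative of f at a satisfies Df_a(A·a) = 0, and the second derivative satisfies D²f_a(A·a, A·a) + Df_a(A²·a) = 0. -/
/-!
Along the orbit `c t = exp(tA)·a` we have `c' = A ∘ c`, so differentiating the invariance
`f ∘ c = f a` gives `g (c t) = 0` for all small `t`, where `g x = Df_x(A x)`. The function `g ∘ c`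
is thus constant near `0` as well, and differentiating it once more at `t = 0` yields
`Dg_a(A a) = D²f_a(A a, A a) + Df_a(A² a) = 0`.
-/

open Filter Topology

theorem hasDerivAt_exp_smul_apply {𝕂 E : Type*} [RCLike 𝕂] [NormedAddCommGroup E]
    [NormedSpace 𝕂 E] [CompleteSpace E] (A : E →L[𝕂] E) (a : E) (t : 𝕂) :
    HasDerivAt (fun s : 𝕂 => NormedSpace.exp (s • A) a) (A (NormedSpace.exp (t • A) a)) t := by
  simpa using (hasDerivAt_exp_smul_const' A t).clm_apply (hasDerivAt_const t a)

theorem HasFDerivAt.apply_eq_zero_of_comp_eventuallyEq_const {𝕜 E F : Type*}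
    [NontriviallyNormedField 𝕜] [NormedAddCommGroup E] [NormedSpace 𝕜 E]
    [NormedAddCommGroup F] [NormedSpace 𝕜 F] {f : E → F} {f' : E →L[𝕜] F} {c : 𝕜 → E}
    {v : E} {t : 𝕜} {y : F} (hf : HasFDerivAt f f' (c t)) (hc : HasDerivAt c v t)
    (hconst : f ∘ c =ᶠ[𝓝 t] fun _ => y) : f' v = 0 :=
  ((hf.comp_hasDerivAt t hc).congr_of_eventuallyEq hconst.symm).unique (hasDerivAt_const t y)

/-- Let `V` be a finite-dimensional real normed vector space, `U ⊆ V` open and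
`f : U → ℝ` of class `C²`. Let `A : V → V` be a linear endomorphism, `a ∈ U` and `ε > 0` such
that for `|t| < ε` one has `exp(tA)·a ∈ U` and `f(exp(tA)·a) = f(a)`. Then `Df_a(A·a) = 0` and
`D²f_a(A·a, A·a) + Df_a(A²·a) = 0`. -/
theorem invariance_derivative_relations
    (V : Type*) [NormedAddCommGroup V] [NormedSpace ℝ V] [FiniteDimensional ℝ V]
    (U : Set V) (hU : IsOpen U) (f : V → ℝ) (hf : ContDiffOn ℝ 2 f U)
    (A : V →L[ℝ] V) (a : V) (ha : a ∈ U) (ε : ℝ) (hε : 0 < ε)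
    (hmem : ∀ t : ℝ, |t| < ε → (NormedSpace.exp (t • A)) a ∈ U)
    (hinv : ∀ t : ℝ, |t| < ε → f ((NormedSpace.exp (t • A)) a) = f a) :
    fderiv ℝ f a (A a) = 0 ∧
      fderiv ℝ (fderiv ℝ f) a (A a) (A a) + fderiv ℝ f a (A (A a)) = 0 := by
  set c : ℝ → V := fun t => NormedSpace.exp (t • A) a
  have hc0 : c 0 = a := by simp [c]
  have hI : IsOpen {t : ℝ | |t| < ε} := isOpen_lt continuous_abs continuous_const
  have h0I : (0 : ℝ) ∈ {t : ℝ | |t| < ε} := by simpa using hε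
  have hfirst (t : ℝ) (ht : |t| < ε) : fderiv ℝ f (c t) (A (c t)) = 0 :=
    ((hf.contDiffAt (hU.mem_nhds (hmem t ht))).differentiableAt two_ne_zero).hasFDerivAt
      |>.apply_eq_zero_of_comp_eventuallyEq_const (hasDerivAt_exp_smul_apply A a t)
        (eventually_of_mem (hI.mem_nhds ht) hinv)
  have hdf : HasFDerivAt (fderiv ℝ f) (fderiv ℝ (fderiv ℝ f) a) a :=
    (((hf.contDiffAt (hU.mem_nhds ha)).fderiv_right (m := 1) le_rfl).differentiableAt
      one_ne_zero).hasFDerivAt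
  have hg := hdf.clm_apply A.hasFDerivAt
  rw [← hc0] at hg
  have hsecond := hg.apply_eq_zero_of_comp_eventuallyEq_const
    (hasDerivAt_exp_smul_apply A a 0) (eventually_of_mem (hI.mem_nhds h0I) hfirst)
  refine ⟨by simpa [hc0] using hfirst 0 h0I, ?_⟩
  simpa [hc0, add_comm] using hsecond
end

section
/- Let n ≥ 1 and let F : ℝⁿ → ℝ be of class C² on an open set. Set D(λ) = ∏_{1≤i<j≤n} (λᵢ² − λⱼ²). Then at every point λ = (λ₁,…,λₙ) of the open set with λᵢ ≠ 0 for all i and D(λ) ≠ 0, one has (1/D(λ)) Σᵢ (∂²/∂λᵢ² + (1/λᵢ) ∂/∂λᵢ)(D·F)(λ) = Σᵢ (∂²F/∂λᵢ² + (1/λᵢ) ∂F/∂λᵢ) + 2 Σ_{i<j} (1/(λᵢ−λⱼ))(∂F/∂λᵢ − ∂F/∂λⱼ) + 2 Σ_{i<j} (1/(λᵢ+λⱼ))(∂F/∂λᵢ + ∂F/∂λⱼ), where D·F denotes the product function λ ↦ D(λ)F(λ). -/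
/-!
Write `L = ∑ᵢ (∂ᵢ² + λᵢ⁻¹ ∂ᵢ)`. Leibniz gives `L(D F) = D · L F + F · L D + 2 ∑ᵢ ∂ᵢD ∂ᵢF`.
Along the `i`-th coordinate line `D` is, up to a constant factor, `∏_{j ≠ i} (t² - λⱼ²)`, so its
logarithmic derivative is `Sᵢ = ∑_{j ≠ i} 2λᵢ / (λᵢ² - λⱼ²)` and `∂ᵢ²D = D (Sᵢ² + Sᵢ')`.
Then `L D = 0`: expanding `Sᵢ²`, the products over triples of distinct indices cancel by the
cyclic identity `∑_cyc μᵢ / ((μᵢ - μⱼ)(μᵢ - μₖ)) = 0` (with `μ = λ²`), and what remains is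
`∑_{i ≠ j} 4 / (λᵢ² - λⱼ²) = 0` by antisymmetry. Finally
`2λᵢ / (λᵢ² - λⱼ²) = 1 / (λᵢ - λⱼ) + 1 / (λᵢ + λⱼ)` turns `∑ᵢ ∂ᵢD ∂ᵢF / D` into the two
sums over pairs.
-/

open Finset Function Filter Topology

section Algebra

variable {ι : Type*} [Fintype ι]

theorem sum_sum_eq_zero_of_antisymm {f : ι → ι → ℝ} (hf : ∀ i j, f j i = -f i j) :
    ∑ i, ∑ j, f i j = 0 := by
  have h : ∑ i, ∑ j, f i j = ∑ i, ∑ j, -f i j := by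
    rw [sum_comm]
    exact sum_congr rfl fun i _ => sum_congr rfl fun j _ => hf i j
  simp only [sum_neg_distrib] at h
  linarith

theorem sum_sum_sum_eq_zero_of_cyclic {g : ι → ι → ι → ℝ}
    (hg : ∀ i j k, g i j k + g j k i + g k i j = 0) : ∑ i, ∑ j, ∑ k, g i j k = 0 := by
  have rotate (g : ι → ι → ι → ℝ) :
      ∑ i, ∑ j, ∑ k, g j k i = ∑ i, ∑ j, ∑ k, g i j k := by
    rw [sum_comm]
    exact sum_congr rfl fun _ _ => sum_comm
  have h1 := rotate g
  have h2 := rotate fun i j k => g j k i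
  have h3 : ∑ i, ∑ j, ∑ k, (g i j k + g j k i + g k i j) = 0 := by simp [hg]
  simp only [sum_add_distrib] at h3
  linarith

theorem sum_sum_eq_sum_sum_ite_lt [LinearOrder ι] {h : ι → ι → ℝ}
    (hdiag : ∀ i, h i i = 0) :
    ∑ i, ∑ j, h i j = ∑ i, ∑ j, if i < j then h i j + h j i else 0 := by
  have hsplit (i j : ι) : h i j = (if i < j then h i j else 0) + if j < i then h i j else 0 := by
    rcases lt_trichotomy i j with hij | rfl | hij
    · simp [hij, hij.not_gt]
    · simp [hdiag]
    · simp [hij, hij.not_gt]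
  calc ∑ i, ∑ j, h i j
      = ∑ i, ∑ j, ((if i < j then h i j else 0) + if j < i then h i j else 0) :=
        sum_congr rfl fun i _ => sum_congr rfl fun j _ => hsplit i j
    _ = ∑ i, ∑ j, ((if i < j then h i j else 0) + if i < j then h j i else 0) := by
        simp only [sum_add_distrib]
        rw [sum_comm (f := fun i j => if j < i then h i j else 0)]
    _ = ∑ i, ∑ j, if i < j then h i j + h j i else 0 := by
        simp only [← ite_add_zero]

variable {x : ι → ℝ}

/- The terms `j = i` of these sums are `0` since `a / 0 = 0`, so they are the sums over `j ≠ i`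
of the computation along the `i`-th coordinate line. -/
theorem sum_sq_sum_div_sq_sub_sq_add_eq_zero [DecidableEq ι] (hx : ∀ i, x i ≠ 0)
    (hinj : Injective fun i => x i ^ 2) :
    ∑ i, ((∑ j, 2 * x i / (x i ^ 2 - x j ^ 2)) ^ 2
        + ∑ j, (2 / (x i ^ 2 - x j ^ 2) - (2 * x i / (x i ^ 2 - x j ^ 2)) ^ 2)
        + 1 / x i * ∑ j, 2 * x i / (x i ^ 2 - x j ^ 2)) = 0 := by
  set s : ι → ι → ℝ := fun i j => 2 * x i / (x i ^ 2 - x j ^ 2)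
  set r : ι → ι → ℝ := fun i j => 2 / (x i ^ 2 - x j ^ 2)
  have hd {i j : ι} (hij : i ≠ j) : x i ^ 2 - x j ^ 2 ≠ 0 := sub_ne_zero.2 (hinj.ne hij)
  have hs_self (i : ι) : s i i = 0 := by simp [s]
  have hsq (i : ι) : (∑ j, s i j) ^ 2 - ∑ j, s i j ^ 2
      = ∑ j, ∑ k, if j = k then 0 else s i j * s i k := by
    have hoff (j k : ι) : (if j = k then 0 else s i j * s i k)
        = s i j * s i k - if j = k then s i j * s i k else 0 := by
      split_ifs <;> simp
    simp only [hoff, sum_sub_distrib, sum_ite_eq, mem_univ, if_true, sq, sum_mul_sum]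
  have hr (i : ι) : 1 / x i * ∑ j, s i j = ∑ j, r i j := by
    rw [mul_sum]
    refine sum_congr rfl fun j _ => ?_
    simp only [s, r]
    field_simp [hx i]
  have hcyc : ∑ i, ∑ j, ∑ k, (if j = k then 0 else s i j * s i k) = 0 := by
    refine sum_sum_sum_eq_zero_of_cyclic fun i j k => ?_
    by_cases hij : i = j
    · subst hij; simp [hs_self]
    by_cases hjk : j = k
    · subst hjk; simp [hs_self]
    by_cases hik : i = k
    · subst hik; simp [hs_self]
    simp only [if_neg hjk, if_neg (Ne.symm hik), if_neg hij, s]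
    field_simp [hd hij, hd hjk, hd hik, hd (Ne.symm hij), hd (Ne.symm hjk), hd (Ne.symm hik)]
    ring
  have hanti : ∑ i, ∑ j, r i j = 0 :=
    sum_sum_eq_zero_of_antisymm fun i j => by simp only [r]; rw [← neg_sub, div_neg]
  calc _ = ∑ i, ((∑ j, ∑ k, if j = k then 0 else s i j * s i k) + 2 * ∑ j, r i j) := by
        refine sum_congr rfl fun i _ => ?_
        rw [← hsq, ← hr, sum_sub_distrib, hr]
        ring
    _ = 0 := by rw [sum_add_distrib, ← mul_sum, hcyc, hanti]; ring

theorem sum_sum_div_sq_sub_sq_mul_eq [LinearOrder ι] (hinj : Injective fun i => x i ^ 2)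
    (f : ι → ℝ) :
    ∑ i, (∑ j, 2 * x i / (x i ^ 2 - x j ^ 2)) * f i
      = (∑ i, ∑ j, if i < j then 1 / (x i - x j) * (f i - f j) else 0)
        + ∑ i, ∑ j, if i < j then 1 / (x i + x j) * (f i + f j) else 0 := by
  simp only [sum_mul]
  rw [sum_sum_eq_sum_sum_ite_lt fun i => by simp, ← sum_add_distrib]
  refine sum_congr rfl fun i _ => ?_
  rw [← sum_add_distrib]
  refine sum_congr rfl fun j _ => ?_
  split_ifs with hij
  · have hsq := hinj.ne hij.ne
    have hprod : (x i - x j) * (x i + x j) ≠ 0 := by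
      rw [mul_comm, ← sq_sub_sq]
      exact sub_ne_zero.2 hsq
    field_simp [left_ne_zero_of_mul hprod, right_ne_zero_of_mul hprod, sub_ne_zero.2 hsq,
      sub_ne_zero.2 hsq.symm]
    ring
  · simp

end Algebra

section Calculus

variable {𝕜 : Type*} [NontriviallyNormedField 𝕜]

theorem deriv_deriv_eq_of_hasDerivAt_mul {g ℓ : 𝕜 → 𝕜} {t₀ ℓ' : 𝕜}
    (hg : ∀ᶠ t in 𝓝 t₀, HasDerivAt g (g t * ℓ t) t) (hℓ : HasDerivAt ℓ ℓ' t₀) :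
    deriv (deriv g) t₀ = g t₀ * (ℓ t₀ ^ 2 + ℓ') := by
  have hderiv : deriv g =ᶠ[𝓝 t₀] fun t => g t * ℓ t := hg.mono fun t ht => ht.deriv
  rw [hderiv.deriv_eq, (hg.self_of_nhds.fun_mul hℓ).deriv]
  ring

theorem fderiv_fderiv_mul_apply {E : Type*} [NormedAddCommGroup E] [NormedSpace 𝕜 E]
    {G H : E → 𝕜} {x : E} (hG : ContDiffAt 𝕜 2 G x) (hH : ContDiffAt 𝕜 2 H x) (v : E) :
    fderiv 𝕜 (fderiv 𝕜 fun y => G y * H y) x v v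
      = G x * fderiv 𝕜 (fderiv 𝕜 H) x v v + 2 * (fderiv 𝕜 G x v * fderiv 𝕜 H x v)
        + H x * fderiv 𝕜 (fderiv 𝕜 G) x v v := by
  have hdiff : ∀ᶠ y in 𝓝 x, DifferentiableAt 𝕜 G y ∧ DifferentiableAt 𝕜 H y :=
    (hG.eventually (by simp)).and (hH.eventually (by simp)) |>.mono fun y hy =>
      ⟨hy.1.differentiableAt (by simp), hy.2.differentiableAt (by simp)⟩
  have hderiv : fderiv 𝕜 (fun y => G y * H y) =ᶠ[𝓝 x]
      fun y => G y • fderiv 𝕜 H y + H y • fderiv 𝕜 G y :=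
    hdiff.mono fun y hy => fderiv_fun_mul hy.1 hy.2
  have hG' := (hG.fderiv_right (m := 1) le_rfl).differentiableAt one_ne_zero
  have hH' := (hH.fderiv_right (m := 1) le_rfl).differentiableAt one_ne_zero
  obtain ⟨hGx, hHx⟩ := hdiff.self_of_nhds
  rw [hderiv.fderiv_eq, fderiv_fun_add (hGx.fun_smul hH') (hHx.fun_smul hG'),
    fderiv_fun_smul hGx hH', fderiv_fun_smul hHx hG']
  simp only [add_apply, smul_apply, ContinuousLinearMap.smulRight_apply, smul_eq_mul]
  ring

variable {ι : Type*} [Fintype ι] [DecidableEq ι]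

theorem hasDerivAt_comp_update {G : (ι → 𝕜) → 𝕜} {x : ι → 𝕜} {i : ι} {t : 𝕜}
    (hG : DifferentiableAt 𝕜 G (update x i t)) :
    HasDerivAt (fun s => G (update x i s)) (fderiv 𝕜 G (update x i t) (Pi.single i 1)) t :=
  hG.hasFDerivAt.comp_hasDerivAt t (hasDerivAt_update x i t)

theorem fderiv_fderiv_single_eq_deriv_deriv_update {G : (ι → 𝕜) → 𝕜} {x : ι → 𝕜}
    (hG : ContDiffAt 𝕜 2 G x) (i : ι) :
    fderiv 𝕜 (fderiv 𝕜 G) x (Pi.single i 1) (Pi.single i 1)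
      = deriv (deriv fun t => G (update x i t)) (x i) := by
  have hline : Tendsto (update x i) (𝓝 (x i)) (𝓝 x) := by
    simpa using (hasDerivAt_update x i (x i)).continuousAt.tendsto
  have hdiff : ∀ᶠ t in 𝓝 (x i), DifferentiableAt 𝕜 G (update x i t) :=
    hline.eventually ((hG.eventually (by simp)).mono fun y hy => hy.differentiableAt (by simp))
  have hderiv : deriv (fun t => G (update x i t)) =ᶠ[𝓝 (x i)]
      fun t => fderiv 𝕜 G (update x i t) (Pi.single i 1) :=
    hdiff.mono fun t ht => (hasDerivAt_comp_update ht).deriv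
  have hG' : DifferentiableAt 𝕜 (fderiv 𝕜 G) x :=
    (hG.fderiv_right (m := 1) le_rfl).differentiableAt one_ne_zero
  have hcomp := (hG'.clm_apply (differentiableAt_const (Pi.single i 1))).hasFDerivAt
  rw [← update_eq_self i x] at hcomp
  have h := (hcomp.comp_hasDerivAt (x i) (hasDerivAt_update x i (x i))).deriv
  rw [update_eq_self, fderiv_clm_apply hG' (differentiableAt_const _)] at h
  rw [hderiv.deriv_eq]
  simpa [comp_def] using h.symm

end Calculus

section RadialOperator

variable {ι : Type*} [Fintype ι] [DecidableEq ι]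

noncomputable def radialOperator (G : (ι → ℝ) → ℝ) (x : ι → ℝ) : ℝ :=
  ∑ i, (fderiv ℝ (fderiv ℝ G) x (Pi.single i 1) (Pi.single i 1)
    + 1 / x i * fderiv ℝ G x (Pi.single i 1))

theorem radialOperator_mul {G H : (ι → ℝ) → ℝ} {x : ι → ℝ} (hG : ContDiffAt ℝ 2 G x)
    (hH : ContDiffAt ℝ 2 H x) :
    radialOperator (fun y => G y * H y) x
      = G x * radialOperator H x + H x * radialOperator G x
        + 2 * ∑ i, fderiv ℝ G x (Pi.single i 1) * fderiv ℝ H x (Pi.single i 1) := by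
  simp only [radialOperator, fderiv_fderiv_mul_apply hG hH,
    fderiv_fun_mul (hG.differentiableAt two_ne_zero) (hH.differentiableAt two_ne_zero), mul_sum,
    ← sum_add_distrib]
  refine sum_congr rfl fun i _ => ?_
  simp only [add_apply, smul_apply, smul_eq_mul]
  ring

end RadialOperator

section SqDiffProd

variable {ι : Type*} [LinearOrder ι] {x : ι → ℝ}

def sqDiffFactor (a b : ι) (x : ι → ℝ) : ℝ :=
  if a < b then x a ^ 2 - x b ^ 2 else 1

theorem logDeriv_sqDiffFactor_update [DecidableEq ι] (i a b : ι) (t : ℝ) :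
    logDeriv (fun s => sqDiffFactor a b (update x i s)) t
      = if a < b then
          (if a = i ∧ b ≠ i then 2 * t / (t ^ 2 - x b ^ 2) else 0)
            + (if b = i ∧ a ≠ i then 2 * t / (t ^ 2 - x a ^ 2) else 0)
        else 0 := by
  unfold sqDiffFactor
  by_cases hab : a < b
  swap
  · simp [hab, logDeriv_const]
  by_cases hai : a = i
  · subst hai
    simp [hab, hab.ne', logDeriv_apply]
  by_cases hbi : b = i
  · subst hbi
    simp [hab, hab.ne, logDeriv_apply]
    rw [← neg_sub, neg_div_neg_eq]
  · simp [hab, hai, hbi, logDeriv_const]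

variable [Fintype ι]

def sqDiffProd (x : ι → ℝ) : ℝ :=
  ∏ a, ∏ b, sqDiffFactor a b x

theorem contDiff_sqDiffProd {n : WithTop ℕ∞} : ContDiff ℝ n (sqDiffProd (ι := ι)) :=
  contDiff_prod fun a _ => contDiff_prod fun b _ => by
    unfold sqDiffFactor
    split_ifs <;> fun_prop

theorem injective_sq_of_sqDiffProd_ne_zero (h : sqDiffProd x ≠ 0) :
    Injective fun i => x i ^ 2 := by
  intro i j hij
  by_contra hne
  refine h (prod_eq_zero (mem_univ (min i j)) (prod_eq_zero (mem_univ (max i j)) ?_))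
  rcases lt_or_gt_of_ne hne with hlt | hlt
  · simp [sqDiffFactor, hlt, hlt.le, hij]
  · simp [sqDiffFactor, hlt, hlt.le, hij]

variable [DecidableEq ι]

theorem hasDerivAt_sqDiffProd_update {i : ι} {t : ℝ} (h : sqDiffProd (update x i t) ≠ 0) :
    HasDerivAt (fun s => sqDiffProd (update x i s))
      (sqDiffProd (update x i t) * ∑ j ∈ univ.erase i, 2 * t / (t ^ 2 - x j ^ 2)) t := by
  set g := fun s => sqDiffProd (update x i s)
  have hfactor (a b : ι) : Differentiable ℝ fun s => sqDiffFactor a b (update x i s) := by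
    simp only [sqDiffFactor, update_apply]
    split_ifs <;> fun_prop
  have hne : ∀ a b : ι, sqDiffFactor a b (update x i t) ≠ 0 := by
    simpa [sqDiffProd, prod_ne_zero_iff] using h
  have hlog : logDeriv g t = ∑ j ∈ univ.erase i, 2 * t / (t ^ 2 - x j ^ 2) := by
    simp only [g, sqDiffProd]
    rw [logDeriv_prod (fun a _ => prod_ne_zero_iff.2 fun b _ => hne a b)
      (fun a _ => (Differentiable.fun_finsetProd fun b _ => hfactor a b).differentiableAt)]
    rw [sum_congr rfl fun a _ => logDeriv_prod (f := fun b s => sqDiffFactor a b (update x i s))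
      (fun b _ => hne a b) (fun b _ => (hfactor a b).differentiableAt)]
    simp only [logDeriv_sqDiffFactor_update]
    rw [← sum_sum_eq_sum_sum_ite_lt
      (h := fun a b => if a = i ∧ b ≠ i then 2 * t / (t ^ 2 - x b ^ 2) else 0) (by simp)]
    simp [ite_and, ← filter_ne', sum_filter]
  have hderiv : deriv g t = g t * logDeriv g t := (mul_div_cancel₀ _ h).symm
  rw [← hlog, ← hderiv]
  exact (((contDiff_sqDiffProd (n := 1)).differentiable one_ne_zero).comp
    fun s => (hasDerivAt_update x i s).differentiableAt) t |>.hasDerivAt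

theorem fderiv_sqDiffProd_single (hx : sqDiffProd x ≠ 0) (i : ι) :
    fderiv ℝ sqDiffProd x (Pi.single i 1) = sqDiffProd x * ∑ j, 2 * x i / (x i ^ 2 - x j ^ 2) := by
  have hline := hasDerivAt_sqDiffProd_update (i := i) (t := x i) (by rwa [update_eq_self])
  have hcomp := hasDerivAt_comp_update (x := x) (i := i) (t := x i)
    ((contDiff_sqDiffProd (n := 1)).differentiable one_ne_zero _)
  rw [update_eq_self] at hline hcomp
  rw [hcomp.unique hline, sum_erase _ (by simp)]

theorem fderiv_fderiv_sqDiffProd_single (hx : sqDiffProd x ≠ 0) (i : ι) :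
    fderiv ℝ (fderiv ℝ sqDiffProd) x (Pi.single i 1) (Pi.single i 1)
      = sqDiffProd x * ((∑ j, 2 * x i / (x i ^ 2 - x j ^ 2)) ^ 2
          + ∑ j, (2 / (x i ^ 2 - x j ^ 2) - (2 * x i / (x i ^ 2 - x j ^ 2)) ^ 2)) := by
  have hinj := injective_sq_of_sqDiffProd_ne_zero hx
  have hnear : ∀ᶠ t in 𝓝 (x i), sqDiffProd (update x i t) ≠ 0 :=
    ((contDiff_sqDiffProd (n := 0)).continuous.comp
      (continuous_const.update i continuous_id)).continuousAt.eventually_ne (by simpa using hx)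
  have hℓ : HasDerivAt (fun t => ∑ j ∈ univ.erase i, 2 * t / (t ^ 2 - x j ^ 2))
      (∑ j ∈ univ.erase i, (2 / (x i ^ 2 - x j ^ 2) - (2 * x i / (x i ^ 2 - x j ^ 2)) ^ 2))
      (x i) := by
    refine HasDerivAt.fun_sum fun j hj => ?_
    have hd : x i ^ 2 - x j ^ 2 ≠ 0 := sub_ne_zero.2 (hinj.ne (ne_of_mem_erase hj).symm)
    refine (((hasDerivAt_id' (x i)).const_mul 2).fun_div
      ((hasDerivAt_pow 2 (x i)).sub_const (x j ^ 2)) hd).congr_deriv ?_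
    field_simp
    ring
  rw [fderiv_fderiv_single_eq_deriv_deriv_update contDiff_sqDiffProd.contDiffAt,
    deriv_deriv_eq_of_hasDerivAt_mul (hnear.mono fun t ht => hasDerivAt_sqDiffProd_update ht) hℓ,
    update_eq_self, sum_erase _ (by simp), sum_erase _ (by simp)]

theorem radialOperator_sqDiffProd (hx₀ : ∀ i, x i ≠ 0) (hx : sqDiffProd x ≠ 0) :
    radialOperator sqDiffProd x = 0 := by
  simp only [radialOperator, fderiv_fderiv_sqDiffProd_single hx, fderiv_sqDiffProd_single hx]
  calc _ = sqDiffProd x * ∑ i, ((∑ j, 2 * x i / (x i ^ 2 - x j ^ 2)) ^ 2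
        + ∑ j, (2 / (x i ^ 2 - x j ^ 2) - (2 * x i / (x i ^ 2 - x j ^ 2)) ^ 2)
        + 1 / x i * ∑ j, 2 * x i / (x i ^ 2 - x j ^ 2)) := by
        rw [mul_sum]
        exact sum_congr rfl fun i _ => by ring
    _ = 0 := by
        rw [sum_sq_sum_div_sq_sub_sq_add_eq_zero hx₀ (injective_sq_of_sqDiffProd_ne_zero hx),
          mul_zero]

end SqDiffProd

theorem radial_operator_rewrite_general
    (n : ℕ) (s : Set (Fin n → ℝ)) (hs : IsOpen s)
    (F : (Fin n → ℝ) → ℝ) (hF : ContDiffOn ℝ 2 F s)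
    (D : (Fin n → ℝ) → ℝ)
    (hD : D = fun lam => ∏ i : Fin n, ∏ j : Fin n,
      if i < j then (lam i) ^ 2 - (lam j) ^ 2 else 1)
    (lam : Fin n → ℝ) (hlam : lam ∈ s) (hne : ∀ i, lam i ≠ 0) (hDne : D lam ≠ 0) :
    (1 / D lam) *
        (∑ i : Fin n,
          (fderiv ℝ (fderiv ℝ (fun x => D x * F x)) lam (Pi.single i 1) (Pi.single i 1)
            + (1 / lam i) * fderiv ℝ (fun x => D x * F x) lam (Pi.single i 1)))
      = (∑ i : Fin n,
            (fderiv ℝ (fderiv ℝ F) lam (Pi.single i 1) (Pi.single i 1)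
              + (1 / lam i) * fderiv ℝ F lam (Pi.single i 1)))
        + 2 * (∑ i : Fin n, ∑ j : Fin n, if i < j then
            (1 / (lam i - lam j)) *
              (fderiv ℝ F lam (Pi.single i 1) - fderiv ℝ F lam (Pi.single j 1)) else 0)
        + 2 * (∑ i : Fin n, ∑ j : Fin n, if i < j then
            (1 / (lam i + lam j)) *
              (fderiv ℝ F lam (Pi.single i 1) + fderiv ℝ F lam (Pi.single j 1)) else 0) := by
  have hD' : D = sqDiffProd := hD
  subst hD'
  change 1 / sqDiffProd lam * radialOperator (fun x => sqDiffProd x * F x) lam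
    = radialOperator F lam + _ + _
  rw [radialOperator_mul contDiff_sqDiffProd.contDiffAt (hF.contDiffAt (hs.mem_nhds hlam)),
    radialOperator_sqDiffProd hne hDne,
    sum_congr rfl fun i _ => by rw [fderiv_sqDiffProd_single hDne, mul_assoc], ← mul_sum,
    sum_sum_div_sq_sub_sq_mul_eq (injective_sq_of_sqDiffProd_ne_zero hDne)]
  field_simp
  ring

/-- For `F : ℝⁿ → ℝ` of class `C²` on an open set, with
`D(λ) = ∏_{i<j} (λᵢ² − λⱼ²)`, at every point of the open set where all `λᵢ ≠ 0` and `D(λ) ≠ 0`: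
`(1/D) Σᵢ (∂²/∂λᵢ² + (1/λᵢ)∂/∂λᵢ)(D·F)
  = Σᵢ (∂²F/∂λᵢ² + (1/λᵢ)∂F/∂λᵢ) + 2Σ_{i<j} (1/(λᵢ−λⱼ))(∂F/∂λᵢ−∂F/∂λⱼ)
    + 2Σ_{i<j} (1/(λᵢ+λⱼ))(∂F/∂λᵢ+∂F/∂λⱼ)`. -/
theorem radial_operator_rewrite
    (n : ℕ) (hn : 1 ≤ n) (s : Set (Fin n → ℝ)) (hs : IsOpen s)
    (F : (Fin n → ℝ) → ℝ) (hF : ContDiffOn ℝ 2 F s)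
    (D : (Fin n → ℝ) → ℝ)
    (hD : D = fun lam => ∏ i : Fin n, ∏ j : Fin n,
      if i < j then (lam i) ^ 2 - (lam j) ^ 2 else 1)
    (lam : Fin n → ℝ) (hlam : lam ∈ s) (hne : ∀ i, lam i ≠ 0) (hDne : D lam ≠ 0) :
    (1 / D lam) *
        (∑ i : Fin n,
          (fderiv ℝ (fderiv ℝ (fun x => D x * F x)) lam (Pi.single i 1) (Pi.single i 1)
            + (1 / lam i) * fderiv ℝ (fun x => D x * F x) lam (Pi.single i 1)))
      = (∑ i : Fin n,
            (fderiv ℝ (fderiv ℝ F) lam (Pi.single i 1) (Pi.single i 1)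
              + (1 / lam i) * fderiv ℝ F lam (Pi.single i 1)))
        + 2 * (∑ i : Fin n, ∑ j : Fin n, if i < j then
            (1 / (lam i - lam j)) *
              (fderiv ℝ F lam (Pi.single i 1) - fderiv ℝ F lam (Pi.single j 1)) else 0)
        + 2 * (∑ i : Fin n, ∑ j : Fin n, if i < j then
            (1 / (lam i + lam j)) *
              (fderiv ℝ F lam (Pi.single i 1) + fderiv ℝ F lam (Pi.single j 1)) else 0) :=
  radial_operator_rewrite_general n s hs F hF D hD lam hlam hne hDne
end

section
/- Let X be a compact Hausdorff topological space and μ a finite positive Borel measure on X such that μ(B) > 0 for every nonempty open set B ⊆ X. Let δ : X → ℝ be a continuous positive function that attains its maximum at a unique point x₀, i.e. δ(x) < δ(x₀) for every x ≠ x₀. For each n set 1/cₙ = ∫_X δ(x)ⁿ μ(dx). Then for every continuous function f : X × X → ℝ, lim_{n→∞} cₙ² ∫_{X×X} f(x,y) δ(x)ⁿ δ(y)ⁿ μ(dx) μ(dy) = f(x₀, x₀). -/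
open MeasureTheory Filter

/-!
Put `D (x, y) = δ x * δ y`. By Fubini `cₙ² = (∫ Dⁿ d(μ ⊗ μ))⁻¹`, so the claim says that the
normalized powers `Dⁿ / ∫ Dⁿ` act as peak functions at `(x₀, x₀)`, the unique maximum of `D`.
Off a neighbourhood of the maximum, compactness bounds `D` by some `s < D (x₀, x₀)`, while
`∫ Dⁿ ≥ tⁿ · μ{D > t}` for `s < t < D (x₀, x₀)` and `{D > t}` is a nonempty open set, of positive
measure. So the normalized powers are `O((s / t)ⁿ)` there, uniformly.
-/

open Topology

theorem Continuous.integrable_prod_of_compactSpace {X Y E : Type*}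
    [TopologicalSpace X] [CompactSpace X] [MeasurableSpace X] [OpensMeasurableSpace X]
    [TopologicalSpace Y] [CompactSpace Y] [MeasurableSpace Y] [OpensMeasurableSpace Y]
    [NormedAddCommGroup E] {μ : Measure X} {ν : Measure Y} [IsFiniteMeasure μ]
    [IsFiniteMeasure ν] {g : X × Y → E} (hg : Continuous g) : Integrable g (μ.prod ν) := by
  have hsupp : HasCompactSupport g := .of_compactSpace g
  obtain ⟨C, hC⟩ := hg.bounded_above_of_compact_support hsupp
  exact ⟨(hsupp.stronglyMeasurable_of_prod hg).aestronglyMeasurable,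
    .of_bounded (C := C) (.of_forall hC)⟩

theorem fst_mul_snd_lt_of_forall_ne_lt {X : Type*} {δ : X → ℝ} {x₀ : X}
    (hδ : ∀ x, 0 ≤ δ x) (hmax : ∀ x, x ≠ x₀ → δ x < δ x₀) {p : X × X} (hp : p ≠ (x₀, x₀)) :
    δ p.1 * δ p.2 < δ x₀ * δ x₀ := by
  have hle : ∀ x, δ x ≤ δ x₀ := fun x ↦ by
    rcases eq_or_ne x x₀ with rfl | hx
    exacts [le_rfl, (hmax x hx).le]
  rcases eq_or_ne p.1 x₀ with h₁ | h₁
  · have h₂ : p.2 ≠ x₀ := fun h₂ ↦ hp (Prod.ext h₁ h₂)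
    rw [h₁]
    exact mul_lt_mul_of_pos_left (hmax _ h₂) ((hδ _).trans_lt (hmax _ h₂))
  · calc δ p.1 * δ p.2 ≤ δ p.1 * δ x₀ := mul_le_mul_of_nonneg_left (hle _) (hδ _)
      _ < δ x₀ * δ x₀ := mul_lt_mul_of_pos_right (hmax _ h₁) ((hδ _).trans_lt (hmax _ h₁))

section PeakFunction

variable {Y : Type*} [MeasurableSpace Y] {ν : Measure Y}

theorem inv_integral_pow_mul_pow_nonneg {D : Y → ℝ} (hD : ∀ y, 0 ≤ D y) (n : ℕ) (y : Y) :
    0 ≤ (∫ z, D z ^ n ∂ν)⁻¹ * D y ^ n :=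
  mul_nonneg (inv_nonneg.2 (integral_nonneg fun z ↦ pow_nonneg (hD z) n)) (pow_nonneg (hD y) n)

variable [IsFiniteMeasure ν]

theorem pow_mul_measureReal_lt_le_integral_pow {D : Y → ℝ} (hD : ∀ y, 0 ≤ D y) {n : ℕ}
    (hint : Integrable (fun y ↦ D y ^ n) ν) {t : ℝ} (ht : 0 ≤ t) :
    t ^ n * ν.real {y | t < D y} ≤ ∫ y, D y ^ n ∂ν :=
  calc t ^ n * ν.real {y | t < D y}
      ≤ t ^ n * ν.real {y | t ^ n ≤ D y ^ n} := by
        gcongr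
        exacts [measure_ne_top ν _, fun hy ↦ pow_le_pow_left₀ ht hy.le n]
    _ ≤ ∫ y, D y ^ n ∂ν :=
        mul_meas_ge_le_integral_of_nonneg (.of_forall fun y ↦ pow_nonneg (hD y) n) hint _

variable [TopologicalSpace Y]

theorem measureReal_lt_pos [ν.IsOpenPosMeasure] {D : Y → ℝ} (hD : Continuous D) {y₀ : Y}
    {t : ℝ} (ht : t < D y₀) : 0 < ν.real {y | t < D y} :=
  ENNReal.toReal_pos ((isOpen_lt continuous_const hD).measure_ne_zero ν ⟨y₀, ht⟩)
    (measure_ne_top ν _)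

theorem integral_pow_pos [ν.IsOpenPosMeasure] {D : Y → ℝ} (hDc : Continuous D)
    (hD : ∀ y, 0 ≤ D y) {y₀ : Y} (hy₀ : 0 < D y₀) {n : ℕ}
    (hint : Integrable (fun y ↦ D y ^ n) ν) : 0 < ∫ y, D y ^ n ∂ν := by
  obtain ⟨t, ht, htD⟩ := exists_between hy₀
  have hβ := measureReal_lt_pos (ν := ν) hDc htD
  exact (by positivity : 0 < t ^ n * ν.real {y | t < D y}).trans_le
    (pow_mul_measureReal_lt_le_integral_pow hD hint ht.le)

/- The neighbourhood `u` of `y₀` need not be measurable: `Y` carries an arbitrary σ-algebra, such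
as the product σ-algebra on `X × X`, which need not contain the open sets when `X` is not second
countable. Hence the mass of `φ n` off `u` is bounded pointwise rather than by a set integral. -/
theorem tendsto_integral_peak_smul_of_bounded {E : Type*} [NormedAddCommGroup E]
    [NormedSpace ℝ E] [CompleteSpace E] {φ : ℕ → Y → ℝ} {g : Y → E} {y₀ : Y}
    (hφ : ∀ n y, 0 ≤ φ n y)
    (hφint : ∀ n, Integrable (φ n) ν) (hφ1 : ∀ n, ∫ y, φ n y ∂ν = 1)
    (hφu : ∀ u ∈ 𝓝 y₀, TendstoUniformlyOn φ 0 atTop uᶜ) {C : ℝ} (hgC : ∀ y, ‖g y‖ ≤ C)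
    (hg : ContinuousAt g y₀) (hφg : ∀ n, Integrable (fun y ↦ φ n y • g y) ν) :
    Tendsto (fun n ↦ ∫ y, φ n y • g y ∂ν) atTop (𝓝 (g y₀)) := by
  refine Metric.tendsto_nhds.2 fun ε hε ↦ ?_
  set V := ν.real Set.univ
  have hC : 0 ≤ C := (norm_nonneg _).trans (hgC y₀)
  set η := ε / 2 / (2 * C * V + 1)
  have hη : 0 < η := by positivity
  have hηV : 2 * C * η * V < ε / 2 := by
    have : 2 * C * V < 2 * C * V + 1 := lt_add_one _
    calc 2 * C * η * V = ε / 2 * (2 * C * V / (2 * C * V + 1)) := by simp only [η]; ring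
      _ < ε / 2 * 1 := by gcongr; rwa [div_lt_one (by positivity)]
      _ = ε / 2 := mul_one _
  set u := g ⁻¹' Metric.ball (g y₀) (ε / 2)
  have hu : u ∈ 𝓝 y₀ := hg.preimage_mem_nhds (Metric.ball_mem_nhds _ (half_pos hε))
  filter_upwards [Metric.tendstoUniformlyOn_iff.1 (hφu u hu) η hη] with n hn
  have hpoint : ∀ y, ‖φ n y • (g y - g y₀)‖ ≤ ε / 2 * φ n y + 2 * C * η := by
    intro y
    rw [norm_smul, Real.norm_of_nonneg (hφ n y)]
    by_cases hy : y ∈ u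
    · have : ‖g y - g y₀‖ < ε / 2 := by rwa [← dist_eq_norm]
      nlinarith [hφ n y]
    · have hφη : φ n y < η := by simpa [Real.dist_eq, abs_of_nonneg (hφ n y)] using hn y hy
      have hg2 : ‖g y - g y₀‖ ≤ 2 * C := by linarith [norm_sub_le (g y) (g y₀), hgC y, hgC y₀]
      nlinarith [hφ n y, norm_nonneg (g y - g y₀)]
  have hdiff : ∫ y, φ n y • g y ∂ν - g y₀ = ∫ y, φ n y • (g y - g y₀) ∂ν := by
    simp_rw [smul_sub]
    rw [integral_sub (hφg n) ((hφint n).smul_const _), integral_smul_const, hφ1, one_smul]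
  calc dist (∫ y, φ n y • g y ∂ν) (g y₀) = ‖∫ y, φ n y • (g y - g y₀) ∂ν‖ := by
        rw [dist_eq_norm, hdiff]
    _ ≤ ∫ y, (ε / 2 * φ n y + 2 * C * η) ∂ν :=
        norm_integral_le_of_norm_le (((hφint n).const_mul _).add (integrable_const _))
          (.of_forall hpoint)
    _ = ε / 2 + 2 * C * η * V := by
        rw [integral_add ((hφint n).const_mul _) (integrable_const _), integral_const_mul, hφ1,
          integral_const, smul_eq_mul]
        ring
    _ < ε := by linarith

theorem tendstoUniformlyOn_inv_integral_pow_mul_pow [CompactSpace Y] [ν.IsOpenPosMeasure]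
    {D : Y → ℝ} (hDc : Continuous D) (hD : ∀ y, 0 ≤ D y) {y₀ : Y}
    (hmax : ∀ y, y ≠ y₀ → D y < D y₀) (hint : ∀ n : ℕ, Integrable (fun y ↦ D y ^ n) ν)
    {u : Set Y} (hu : u ∈ 𝓝 y₀) :
    TendstoUniformlyOn (fun n y ↦ (∫ z, D z ^ n ∂ν)⁻¹ * D y ^ n) 0 atTop uᶜ := by
  obtain ⟨v, hvu, hv, hy₀v⟩ := mem_nhds_iff.1 hu
  refine TendstoUniformlyOn.mono ?_ (Set.compl_subset_compl.2 hvu)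
  rcases vᶜ.eq_empty_or_nonempty with hempty | hne
  · rw [hempty]
    exact tendstoUniformlyOn_empty
  obtain ⟨y₁, hy₁, hy₁max⟩ := hv.isClosed_compl.isCompact.exists_isMaxOn hne hDc.continuousOn
  obtain ⟨t, ht₁, ht₀⟩ := exists_between (hmax y₁ fun h ↦ hy₁ (h ▸ hy₀v))
  have ht : 0 < t := (hD y₁).trans_lt ht₁
  set β := ν.real {y | t < D y}
  have hβ : 0 < β := measureReal_lt_pos hDc ht₀
  have hbound : ∀ n : ℕ, ∀ y ∈ vᶜ, (∫ z, D z ^ n ∂ν)⁻¹ * D y ^ n ≤ β⁻¹ * (D y₁ / t) ^ n := by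
    intro n y hy
    calc (∫ z, D z ^ n ∂ν)⁻¹ * D y ^ n ≤ (t ^ n * β)⁻¹ * D y₁ ^ n := by
          gcongr
          · exact pow_nonneg (hD y) n
          · exact pow_mul_measureReal_lt_le_integral_pow hD (hint n) ht.le
          · exact hD y
          · exact hy₁max hy
      _ = β⁻¹ * (D y₁ / t) ^ n := by
          rw [div_pow]
          field_simp
  have hlim : Tendsto (fun n : ℕ ↦ β⁻¹ * (D y₁ / t) ^ n) atTop (𝓝 0) := by
    simpa using (tendsto_pow_atTop_nhds_zero_of_lt_one (div_nonneg (hD y₁) ht.le)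
      ((div_lt_one ht).2 ht₁)).const_mul β⁻¹
  refine Metric.tendstoUniformlyOn_iff.2 fun ε hε ↦ ?_
  filter_upwards [hlim.eventually (gt_mem_nhds hε)] with n hn y hy
  rw [Pi.zero_apply, dist_zero_left, Real.norm_of_nonneg (inv_integral_pow_mul_pow_nonneg hD n y)]
  exact (hbound n y hy).trans_lt hn

theorem tendsto_integral_pow_smul_of_unique_maximum_of_compactSpace [CompactSpace Y]
    [ν.IsOpenPosMeasure] {E : Type*} [NormedAddCommGroup E] [NormedSpace ℝ E] [CompleteSpace E]
    {D : Y → ℝ} (hDc : Continuous D) (hD : ∀ y, 0 ≤ D y) {y₀ : Y} (hy₀ : 0 < D y₀)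
    (hmax : ∀ y, y ≠ y₀ → D y < D y₀) (hint : ∀ n : ℕ, Integrable (fun y ↦ D y ^ n) ν)
    {g : Y → E} (hg : Continuous g) (hDg : ∀ n : ℕ, Integrable (fun y ↦ D y ^ n • g y) ν) :
    Tendsto (fun n : ℕ ↦ (∫ y, D y ^ n ∂ν)⁻¹ • ∫ y, D y ^ n • g y ∂ν) atTop (𝓝 (g y₀)) := by
  obtain ⟨C, hC⟩ := hg.bounded_above_of_compact_support (.of_compactSpace g)
  have hφ1 : ∀ n : ℕ, ∫ y, (∫ z, D z ^ n ∂ν)⁻¹ * D y ^ n ∂ν = 1 := fun n ↦ by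
    rw [integral_const_mul, inv_mul_cancel₀ (integral_pow_pos hDc hD hy₀ (hint n)).ne']
  have hpeak := tendsto_integral_peak_smul_of_bounded (inv_integral_pow_mul_pow_nonneg hD)
    (fun n ↦ (hint n).const_mul _) hφ1
    (fun u hu ↦ tendstoUniformlyOn_inv_integral_pow_mul_pow hDc hD hmax hint hu) hC
    hg.continuousAt (fun n ↦ by simp only [mul_smul]; exact (hDg n).smul (∫ z, D z ^ n ∂ν)⁻¹)
  simpa only [mul_smul, integral_smul] using hpeak

end PeakFunction

theorem laplace_method_product_limit_general
    (X : Type*) [TopologicalSpace X] [CompactSpace X]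
    [MeasurableSpace X] [BorelSpace X]
    (μ : Measure X) [IsFiniteMeasure μ]
    (hμ : ∀ B : Set X, IsOpen B → B.Nonempty → 0 < μ B)
    (δ : X → ℝ) (hδc : Continuous δ) (hδpos : ∀ x, 0 < δ x)
    (x₀ : X) (hmax : ∀ x, x ≠ x₀ → δ x < δ x₀)
    (c : ℕ → ℝ) (hc : ∀ n : ℕ, 1 / c n = ∫ x, δ x ^ n ∂μ)
    (f : X × X → ℝ) (hf : Continuous f) :
    Tendsto (fun n : ℕ =>
        (c n) ^ 2 * ∫ p : X × X, f p * δ p.1 ^ n * δ p.2 ^ n ∂(μ.prod μ))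
      atTop (nhds (f (x₀, x₀))) := by
  have : μ.IsOpenPosMeasure := ⟨fun U hU hne ↦ (hμ U hU hne).ne'⟩
  set D : X × X → ℝ := fun p ↦ δ p.1 * δ p.2
  have hDc : Continuous D := (hδc.comp continuous_fst).mul (hδc.comp continuous_snd)
  have hc_sq : ∀ n : ℕ, c n ^ 2 = (∫ p, D p ^ n ∂μ.prod μ)⁻¹ := fun n ↦ by
    simp_rw [D, mul_pow]
    rw [integral_prod_mul (fun x ↦ δ x ^ n) (fun x ↦ δ x ^ n), ← hc n, one_div, ← mul_inv,
      inv_inv, sq]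
  have hpeak := tendsto_integral_pow_smul_of_unique_maximum_of_compactSpace (ν := μ.prod μ) hDc
    (fun p ↦ (mul_pos (hδpos p.1) (hδpos p.2)).le) (mul_pos (hδpos x₀) (hδpos x₀))
    (fun _ hp ↦ fst_mul_snd_lt_of_forall_ne_lt (fun x ↦ (hδpos x).le) hmax hp)
    (fun n ↦ (hDc.pow n).integrable_prod_of_compactSpace) hf
    (fun n ↦ ((hDc.pow n).smul hf).integrable_prod_of_compactSpace)
  refine hpeak.congr fun n ↦ ?_
  rw [hc_sq, smul_eq_mul]
  congr 1
  refine integral_congr_ae (.of_forall fun p ↦ ?_)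
  simp only [D, smul_eq_mul, mul_pow]
  ring

/-- Let `X` be a compact Hausdorff space, `μ` a finite Borel measure giving
positive mass to every nonempty open set, `δ : X → ℝ` a continuous positive function attaining
its maximum at a unique point `x₀`, and `1/cₙ = ∫ δⁿ dμ`. Then for every continuous
`f : X × X → ℝ`,
`lim_{n→∞} cₙ² ∫_{X×X} f(x,y) δ(x)ⁿ δ(y)ⁿ μ(dx)μ(dy) = f(x₀,x₀)`. -/
theorem laplace_method_product_limit
    (X : Type*) [TopologicalSpace X] [CompactSpace X] [T2Space X]
    [MeasurableSpace X] [BorelSpace X]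
    (μ : Measure X) [IsFiniteMeasure μ]
    (hμ : ∀ B : Set X, IsOpen B → B.Nonempty → 0 < μ B)
    (δ : X → ℝ) (hδc : Continuous δ) (hδpos : ∀ x, 0 < δ x)
    (x₀ : X) (hmax : ∀ x, x ≠ x₀ → δ x < δ x₀)
    (c : ℕ → ℝ) (hc : ∀ n : ℕ, 1 / c n = ∫ x, δ x ^ n ∂μ)
    (f : X × X → ℝ) (hf : Continuous f) :
    Tendsto (fun n : ℕ =>
        (c n) ^ 2 * ∫ p : X × X, f p * δ p.1 ^ n * δ p.2 ^ n ∂(μ.prod μ))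
      atTop (nhds (f (x₀, x₀))) :=
  laplace_method_product_limit_general X μ hμ δ hδc hδpos x₀ hmax c hc f hf
end

section
/- Fix an integer m ≥ 1. For n ≥ 2m define the probability density D_{m,n} on [0,π]^m by D_{m,n}(θ) = c_{m,n} | ∏_{1≤i<j≤m} sin²(θᵢ+θⱼ) sin²(θᵢ−θⱼ) · ∏_{i=1}^m sin(2θᵢ) (sin θᵢ)^{2(n−2m)} |, where the constant c_{m,n} > 0 is chosen so that ∫_{[0,π]^m} D_{m,n}(θ) dθ₁⋯dθ_m = 1. Then for every continuous function f on [0,π]^m × [0,π]^m, lim_{n→∞} ∫_{[0,π]^m × [0,π]^m} f(θ, ζ) D_{m,n}(θ) D_{m,n}(ζ) dθ dζ = f(π/2,…,π/2; π/2,…,π/2). -/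
/-!
On `[0,π]^m` the density factors as `cartanDensity m (2m) θ · (∏ᵢ sin θᵢ)^{2(n-2m)}`, with a
continuous first factor independent of `n`, and `∏ᵢ sin θᵢ` attains its maximum `1` on the cube
only at `p = (π/2,…,π/2)`. This is Laplace's method: off a ball around `p` the power is at most
`q^k` with `q < 1`, whereas near some point close to `p` where the first factor is positive (it
vanishes at `p` itself) the power is at least `q'^k` with `q < q'`. Hence the probability measures
`D_{m,n} dθ` put vanishing mass outside every ball around `p`, so do their products around
`(p, p)`, and integrating a function that is bounded and continuous at `(p, p)` against these
tends to its value there.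
-/

open MeasureTheory Filter

/-- The (unnormalized) density of the Cartan decomposition for the symmetric pair
`(U(n), U(m) × U(n−m))` on `[0,π]^m`:
`|∏_{i<j} sin²(θᵢ+θⱼ) sin²(θᵢ−θⱼ) ∏ᵢ sin(2θᵢ) (sin θᵢ)^{2(n−2m)}|`. -/
noncomputable def cartanDensity (m n : ℕ) (θ : Fin m → ℝ) : ℝ :=
  |(∏ i : Fin m, ∏ j : Fin m,
      if i < j then (Real.sin (θ i + θ j)) ^ 2 * (Real.sin (θ i - θ j)) ^ 2 else 1) *
    ∏ i : Fin m, Real.sin (2 * θ i) * (Real.sin (θ i)) ^ (2 * (n - 2 * m))|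

open Real Set Topology Metric

section Concentration

variable {X ι : Type*} [PseudoMetricSpace X] [MeasurableSpace X]

def ConcentratesAt (l : Filter ι) (ν : ι → Measure X) (p : X) : Prop :=
  ∀ ε > 0, Tendsto (fun i => ν i (ball p ε)ᶜ) l (𝓝 0)

theorem tendsto_integral_of_concentratesAt [OpensMeasurableSpace X] {l : Filter ι}
    {ν : ι → Measure X} {p : X} {S : Set X} {g : X → ℝ} {M : ℝ}
    (hν : ConcentratesAt l ν p) (hprob : ∀ᶠ i in l, IsProbabilityMeasure (ν i))
    (hS : ∀ i, ∀ᵐ x ∂ν i, x ∈ S) (hgM : ∀ x ∈ S, ‖g x‖ ≤ M) (hgp : ContinuousWithinAt g S p)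
    (hg : ∀ᶠ i in l, Integrable g (ν i)) :
    Tendsto (fun i => ∫ x, g x ∂ν i) l (𝓝 (g p)) := by
  rw [Metric.tendsto_nhds]
  intro η hη
  obtain ⟨δ, hδ, hgδ⟩ := Metric.continuousWithinAt_iff.mp hgp (η / 2) (half_pos hη)
  set C := |M| + ‖g p‖ + 1
  have hC : 0 < C := by positivity
  have hmass : Tendsto (fun i => (ν i).real (ball p δ)ᶜ) l (𝓝 0) :=
    (ENNReal.tendsto_toReal ENNReal.zero_ne_top).comp (hν δ hδ)
  filter_upwards [hprob, hg, (tendsto_order.1 hmass).2 (η / (2 * C)) (by positivity)]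
    with i hi hgi hsmall
  have hbound : ∀ᵐ x ∂ν i, ‖g x - g p‖ ≤ η / 2 + (ball p δ)ᶜ.indicator (fun _ => C) x := by
    filter_upwards [hS i] with x hx
    by_cases hxb : x ∈ ball p δ
    · simpa [hxb, ← Real.dist_eq] using (hgδ hx hxb).le
    · rw [indicator_of_mem (mem_compl hxb)]
      linarith [norm_sub_le (g x) (g p), hgM x hx, le_abs_self M]
  calc dist (∫ x, g x ∂ν i) (g p) = ‖∫ x, (g x - g p) ∂ν i‖ := by
        rw [integral_sub hgi (integrable_const _), integral_const, probReal_univ, one_smul,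
          dist_eq_norm]
    _ ≤ ∫ x, (η / 2 + (ball p δ)ᶜ.indicator (fun _ => C) x) ∂ν i :=
        norm_integral_le_of_norm_le ((integrable_const _).add
          ((integrable_const C).indicator measurableSet_ball.compl)) hbound
    _ = η / 2 + (ν i).real (ball p δ)ᶜ * C := by
        rw [integral_add (integrable_const _) ((integrable_const C).indicator
          measurableSet_ball.compl), integral_const, probReal_univ, one_smul,
          integral_indicator_const _ measurableSet_ball.compl, smul_eq_mul]
    _ < η := by
        have := (lt_div_iff₀ (by positivity : (0:ℝ) < 2 * C)).1 hsmall
        nlinarith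

theorem ConcentratesAt.prod {Y : Type*} [PseudoMetricSpace Y] [MeasurableSpace Y] {l : Filter ι}
    {ν : ι → Measure X} {ν' : ι → Measure Y} [∀ i, SFinite (ν' i)] {p : X} {p' : Y}
    (hν : ConcentratesAt l ν p) (hν' : ConcentratesAt l ν' p')
    (hprob : ∀ᶠ i in l, IsProbabilityMeasure (ν i))
    (hprob' : ∀ᶠ i in l, IsProbabilityMeasure (ν' i)) :
    ConcentratesAt l (fun i => (ν i).prod (ν' i)) (p, p') := by
  intro ε hε
  refine tendsto_of_tendsto_of_tendsto_of_le_of_le' tendsto_const_nhds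
    (by simpa using (hν ε hε).add (hν' ε hε)) (Eventually.of_forall fun _ => zero_le) ?_
  filter_upwards [hprob, hprob'] with i hi hi'
  calc (ν i).prod (ν' i) (ball (p, p') ε)ᶜ
      = (ν i).prod (ν' i) ((ball p ε)ᶜ ×ˢ univ ∪ univ ×ˢ (ball p' ε)ᶜ) := by
        rw [← ball_prod_same, compl_prod_eq_union]
    _ ≤ ν i (ball p ε)ᶜ + ν' i (ball p' ε)ᶜ := by
        refine (measure_union_le _ _).trans ?_
        simp only [Measure.prod_prod, measure_univ, mul_one, one_mul, le_refl]

end Concentration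

theorem integral_prod_withDensity_ofReal {X : Type*} [MeasurableSpace X] {μ : Measure X}
    [SFinite μ] {D : X → ℝ} (hD : Measurable D) (hD0 : ∀ x, 0 ≤ D x) {g : X × X → ℝ}
    (hg : Integrable g ((μ.withDensity fun x => ENNReal.ofReal (D x)).prod
      (μ.withDensity fun x => ENNReal.ofReal (D x)))) :
    ∫ z, g z ∂(μ.withDensity fun x => ENNReal.ofReal (D x)).prod
      (μ.withDensity fun x => ENNReal.ofReal (D x)) =
      ∫ x, ∫ y, g (x, y) * D x * D y ∂μ ∂μ := by
  have hfin : ∀ᵐ x ∂μ, ENNReal.ofReal (D x) < ⊤ := ae_of_all _ fun _ => ENNReal.ofReal_lt_top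
  rw [integral_prod _ hg, integral_withDensity_eq_integral_toReal_smul hD.ennreal_ofReal hfin]
  refine integral_congr_ae (ae_of_all _ fun x => ?_)
  simp only [integral_withDensity_eq_integral_toReal_smul hD.ennreal_ofReal hfin,
    ENNReal.toReal_ofReal (hD0 _), smul_eq_mul, ← integral_const_mul]
  congr 1 with y
  ring

section Laplace

variable {X : Type*} [MeasurableSpace X] {μ : Measure X} {S K : Set X} {F h : X → ℝ} {q : ℝ}

theorem norm_setIntegral_mul_pow_le {B : ℝ} (hK : μ K < ⊤) (hFB : ∀ x ∈ K, ‖F x‖ ≤ B)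
    (hh0 : ∀ x ∈ K, 0 ≤ h x) (hKq : ∀ x ∈ K, h x ≤ q) (k : ℕ) :
    ‖∫ x in K, F x * h x ^ k ∂μ‖ ≤ B * q ^ k * μ.real K := by
  refine norm_setIntegral_le_of_norm_le_const hK fun x hx => ?_
  rw [norm_mul, norm_pow, Real.norm_of_nonneg (hh0 x hx)]
  exact mul_le_mul (hFB x hx) (pow_le_pow_left₀ (hh0 x hx) (hKq x hx) k)
    (pow_nonneg (hh0 x hx) k) ((norm_nonneg _).trans (hFB x hx))

variable [TopologicalSpace X] [OpensMeasurableSpace X] [T2Space X] [IsFiniteMeasureOnCompacts μ]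

theorem exists_pos_mul_pow_le_setIntegral_mul_pow [μ.IsOpenPosMeasure] (hS : IsCompact S)
    (hF : ContinuousOn F S) (hF0 : ∀ x ∈ S, 0 ≤ F x) (hh : ContinuousOn h S)
    (hh0 : ∀ x ∈ S, 0 ≤ h x) {x₀ : X} (hx₀ : x₀ ∈ interior S) (hFx₀ : 0 < F x₀)
    (hq0 : 0 ≤ q) (hq : q < h x₀) :
    ∃ C > 0, ∀ k : ℕ, C * q ^ k ≤ ∫ x in S, F x * h x ^ k ∂μ := by
  set V := interior S ∩ F ⁻¹' Ioi (F x₀ / 2) ∩ h ⁻¹' Ioi q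
  have hVS : V ⊆ S := fun x hx => interior_subset hx.1.1
  have hVo : IsOpen V :=
    (hh.mono (inter_subset_left.trans interior_subset)).isOpen_inter_preimage
      ((hF.mono interior_subset).isOpen_inter_preimage isOpen_interior isOpen_Ioi) isOpen_Ioi
  have hVfin : μ V ≠ ⊤ := (measure_mono hVS).trans_lt hS.measure_lt_top |>.ne
  have hV : 0 < μ.real V :=
    ENNReal.toReal_pos (hVo.measure_pos μ ⟨x₀, ⟨hx₀, half_lt_self hFx₀⟩, hq⟩).ne' hVfin
  refine ⟨F x₀ / 2 * μ.real V, by positivity, fun k => ?_⟩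
  have hint : IntegrableOn (fun x => F x * h x ^ k) S μ :=
    (hF.mul (hh.pow k)).integrableOn_compact hS
  calc F x₀ / 2 * μ.real V * q ^ k = F x₀ / 2 * q ^ k * μ.real V := by ring
    _ ≤ ∫ x in V, F x * h x ^ k ∂μ :=
        setIntegral_ge_of_const_le_real hVo.measurableSet hVfin
          (fun x hx => mul_le_mul hx.1.2.le (pow_le_pow_left₀ hq0 hx.2.le k) (by positivity)
            (hF0 x (hVS hx)))
          (hint.mono_set hVS)
    _ ≤ ∫ x in S, F x * h x ^ k ∂μ := by
        refine setIntegral_mono_set hint ?_ hVS.eventuallyLE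
        filter_upwards [ae_restrict_mem hS.isClosed.measurableSet] with x hx
        exact mul_nonneg (hF0 x hx) (pow_nonneg (hh0 x hx) k)

theorem tendsto_setIntegral_mul_pow_div [μ.IsOpenPosMeasure] (hS : IsCompact S) (hKS : K ⊆ S)
    (hF : ContinuousOn F S) (hF0 : ∀ x ∈ S, 0 ≤ F x) (hh : ContinuousOn h S)
    (hh0 : ∀ x ∈ S, 0 ≤ h x) (hq0 : 0 ≤ q) (hKq : ∀ x ∈ K, h x ≤ q) {x₀ : X}
    (hx₀ : x₀ ∈ interior S) (hFx₀ : 0 < F x₀) (hq : q < h x₀) :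
    Tendsto (fun k : ℕ => (∫ x in K, F x * h x ^ k ∂μ) / ∫ x in S, F x * h x ^ k ∂μ)
      atTop (𝓝 0) := by
  obtain ⟨q', hqq', hq'⟩ := exists_between hq
  have hq'0 : 0 < q' := hq0.trans_lt hqq'
  obtain ⟨c, hc, hlow⟩ :=
    exists_pos_mul_pow_le_setIntegral_mul_pow (μ := μ) hS hF hF0 hh hh0 hx₀ hFx₀ hq'0.le hq'
  obtain ⟨B, hB⟩ := hS.exists_bound_of_continuousOn hF
  have hup := norm_setIntegral_mul_pow_le (μ := μ) ((measure_mono hKS).trans_lt hS.measure_lt_top)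
    (fun x hx => (hB x (hKS hx)).trans (le_abs_self B)) (fun x hx => hh0 x (hKS hx)) hKq
  have hgeom : Tendsto (fun k : ℕ => |B| * μ.real K / c * (q / q') ^ k) atTop (𝓝 0) := by
    simpa using (tendsto_pow_atTop_nhds_zero_of_lt_one (div_nonneg hq0 hq'0.le)
      ((div_lt_one hq'0).2 hqq')).const_mul (|B| * μ.real K / c)
  refine squeeze_zero_norm (fun k => ?_) hgeom
  have hpos : 0 < c * q' ^ k := by positivity
  have hSpos := hpos.trans_le (hlow k)
  rw [norm_div, Real.norm_of_nonneg hSpos.le, div_le_iff₀ hSpos]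
  calc ‖∫ x in K, F x * h x ^ k ∂μ‖ ≤ |B| * q ^ k * μ.real K := hup k
    _ = |B| * μ.real K / c * (q / q') ^ k * (c * q' ^ k) := by
        rw [div_pow]; field_simp
    _ ≤ |B| * μ.real K / c * (q / q') ^ k * ∫ x in S, F x * h x ^ k ∂μ := by
        gcongr
        exact hlow k

end Laplace

section Cartan

def angleCube (m : ℕ) : Set (Fin m → ℝ) := univ.pi fun _ => Icc 0 π

variable {m n : ℕ} {θ : Fin m → ℝ}

theorem isCompact_angleCube : IsCompact (angleCube m) := isCompact_univ_pi fun _ => isCompact_Icc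

theorem measurableSet_angleCube : MeasurableSet (angleCube m) :=
  isCompact_angleCube.isClosed.measurableSet

theorem interior_angleCube : interior (angleCube m) = univ.pi fun _ => Ioo 0 π := by
  rw [angleCube, interior_pi_set finite_univ]
  simp only [interior_Icc]

theorem sin_nonneg_of_mem_angleCube (hθ : θ ∈ angleCube m) (i : Fin m) : 0 ≤ sin (θ i) :=
  sin_nonneg_of_nonneg_of_le_pi (hθ i trivial).1 (hθ i trivial).2

theorem continuous_cartanDensity : Continuous (cartanDensity m n) := by
  unfold cartanDensity
  refine (Continuous.mul ?_ (by fun_prop)).abs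
  refine continuous_finsetProd _ fun i _ => continuous_finsetProd _ fun j _ => ?_
  split <;> fun_prop

theorem cartanDensity_eq_mul_pow (hθ : ∀ i, 0 ≤ sin (θ i)) :
    cartanDensity m n θ = cartanDensity m (2 * m) θ * (∏ i, sin (θ i)) ^ (2 * (n - 2 * m)) := by
  simp only [cartanDensity, Nat.sub_self, mul_zero, pow_zero, mul_one, Finset.prod_mul_distrib,
    Finset.prod_pow, ← mul_assoc, abs_mul (_ * _) (_ ^ _),
    abs_of_nonneg (pow_nonneg (Finset.prod_nonneg fun i _ => hθ i) _)]

theorem cartanDensity_pos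
    (hsum : ∀ i j, i < j → sin (θ i + θ j) ≠ 0) (hsub : ∀ i j, i < j → sin (θ i - θ j) ≠ 0)
    (htwo : ∀ i, sin (2 * θ i) ≠ 0) (hsin : ∀ i, sin (θ i) ≠ 0) : 0 < cartanDensity m n θ := by
  refine abs_pos.2 (mul_ne_zero ?_ ?_)
  · refine Finset.prod_ne_zero_iff.2 fun i _ => Finset.prod_ne_zero_iff.2 fun j _ => ?_
    split_ifs with hij
    · exact mul_ne_zero (pow_ne_zero _ (hsum i j hij)) (pow_ne_zero _ (hsub i j hij))
    · exact one_ne_zero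
  · exact Finset.prod_ne_zero_iff.2 fun i _ => mul_ne_zero (htwo i) (pow_ne_zero _ (hsin i))

theorem sin_lt_one_of_mem_Icc {x : ℝ} (hx : x ∈ Icc 0 π) (hne : x ≠ π / 2) : sin x < 1 := by
  have hcos : cos x ≠ 0 := fun h => hne <| strictAntiOn_cos.injOn hx
    ⟨by positivity, by linarith [pi_pos]⟩ (h.trans cos_pi_div_two.symm)
  nlinarith [sin_sq_add_cos_sq x, sin_nonneg_of_nonneg_of_le_pi hx.1 hx.2, sq_pos_of_ne_zero hcos]

theorem prod_sin_lt_one (hθ : θ ∈ angleCube m) (hne : θ ≠ fun _ => π / 2) :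
    ∏ i, sin (θ i) < 1 := by
  obtain ⟨i, hi⟩ := Function.ne_iff.1 hne
  have h0 := sin_nonneg_of_mem_angleCube hθ
  calc ∏ j, sin (θ j) = (∏ j ∈ Finset.univ.erase i, sin (θ j)) * sin (θ i) :=
        (Finset.prod_erase_mul _ _ (Finset.mem_univ i)).symm
    _ ≤ sin (θ i) := mul_le_of_le_one_left (h0 i)
        (Finset.prod_le_one (fun j _ => h0 j) fun j _ => sin_le_one _)
    _ < 1 := sin_lt_one_of_mem_Icc (hθ i trivial) hi

/-- Along `θᵢ = π/2 - (i+1)t`, `t → 0⁺`, all the sines in `cartanDensity` are positive. -/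
theorem mem_closure_cartanDensity_pos :
    (fun _ => π / 2) ∈ closure {θ ∈ interior (angleCube m) | 0 < cartanDensity m n θ} := by
  set θ : ℝ → Fin m → ℝ := fun t i => π / 2 - ((i : ℝ) + 1) * t
  have hlim : Tendsto θ (𝓝[>] 0) (𝓝 fun _ => π / 2) := by
    refine (Continuous.tendsto' (by fun_prop) 0 _ ?_).mono_left nhdsWithin_le_nhds
    ext i; simp [θ]
  refine mem_closure_of_tendsto hlim ?_
  filter_upwards [Ioo_mem_nhdsGT (by positivity : 0 < π / (2 * m + 1))] with t ⟨ht, htπ⟩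
  rw [lt_div_iff₀ (by positivity)] at htπ
  have hle : ∀ i : Fin m, t ≤ ((i : ℝ) + 1) * t ∧ ((i : ℝ) + 1) * t ≤ m * t := fun i => by
    have hi : ((i : ℕ) : ℝ) + 1 ≤ m := by exact_mod_cast i.isLt
    constructor <;> nlinarith [(Nat.cast_nonneg (i : ℕ) : (0 : ℝ) ≤ i)]
  have hlt : ∀ i j : Fin m, i < j → ((i : ℝ) + 1) * t + t ≤ ((j : ℝ) + 1) * t := fun i j hij => by
    have : ((i : ℕ) : ℝ) + 1 ≤ (j : ℕ) := by exact_mod_cast hij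
    nlinarith
  refine ⟨?_, cartanDensity_pos (fun i j hij => ?_) (fun i j hij => ?_) (fun i => ?_)
    (fun i => ?_)⟩
  · rw [interior_angleCube]
    exact fun i _ => ⟨by simp only [θ]; linarith [hle i], by simp only [θ]; linarith [hle i]⟩
  all_goals refine (sin_pos_of_pos_of_lt_pi ?_ ?_).ne' <;> simp only [θ]
  all_goals first
    | linarith [hle i, hle j, hlt i j hij]
    | linarith [hle i]

theorem exists_prod_sin_le_of_mem_compl_ball {ε : ℝ} (hε : 0 < ε) :
    ∃ q, 0 ≤ q ∧ q < 1 ∧ ∀ θ ∈ angleCube m \ ball (fun _ => π / 2) ε, ∏ i, sin (θ i) ≤ q := by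
  obtain ⟨q, hq1, hq⟩ : ∃ q < 1, ∀ θ ∈ angleCube m \ ball (fun _ => π / 2) ε, ∏ i, sin (θ i) ≤ q :=
    (isCompact_angleCube.diff isOpen_ball).exists_forall_le' (α := ℝᵒᵈ)
      (by fun_prop : Continuous fun θ : Fin m → ℝ => ∏ i, sin (θ i)).continuousOn
      fun θ hθ => prod_sin_lt_one hθ.1 fun h => hθ.2 (h ▸ mem_ball_self hε)
  exact ⟨max q 0, le_max_right _ _, max_lt hq1 one_pos,
    fun θ hθ => (hq θ hθ).trans (le_max_left _ _)⟩

theorem tendsto_setIntegral_cartanDensity_compl_ball_div {ε : ℝ} (hε : 0 < ε) :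
    Tendsto (fun n => (∫ θ in angleCube m \ ball (fun _ => π / 2) ε, cartanDensity m n θ) /
      ∫ θ in angleCube m, cartanDensity m n θ) atTop (𝓝 0) := by
  set h : (Fin m → ℝ) → ℝ := fun θ => ∏ i, sin (θ i)
  have hh : Continuous h := by fun_prop
  obtain ⟨q, hq0, hq1, hKq⟩ := exists_prod_sin_le_of_mem_compl_ball (m := m) hε
  obtain ⟨θ₀, hθ₀q, hθ₀, hFθ₀⟩ := mem_closure_iff.1 (mem_closure_cartanDensity_pos (n := 2 * m))
    (h ⁻¹' Ioi q) (isOpen_Ioi.preimage hh) (by simpa [h] using hq1)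
  have hlim := tendsto_setIntegral_mul_pow_div (μ := volume) isCompact_angleCube sdiff_subset
    continuous_cartanDensity.continuousOn (fun _ _ => abs_nonneg _) hh.continuousOn
    (fun θ hθ => Finset.prod_nonneg fun i _ => sin_nonneg_of_mem_angleCube hθ i) hq0 hKq hθ₀ hFθ₀
    hθ₀q
  refine (hlim.comp (tendsto_atTop_mono (fun n => Nat.le_mul_of_pos_left _ two_pos)
    (tendsto_sub_atTop_nat (2 * m)))).congr fun n => ?_
  have hcongr : ∀ s ⊆ angleCube m, MeasurableSet s →
      ∫ θ in s, cartanDensity m (2 * m) θ * h θ ^ (2 * (n - 2 * m)) =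
        ∫ θ in s, cartanDensity m n θ := fun s hs hsm =>
    setIntegral_congr_fun hsm fun θ hθ =>
      (cartanDensity_eq_mul_pow (sin_nonneg_of_mem_angleCube (hs hθ))).symm
  simp only [Function.comp_apply]
  rw [hcongr _ sdiff_subset (measurableSet_angleCube.diff measurableSet_ball),
    hcongr _ subset_rfl measurableSet_angleCube]

variable {c : ℝ}

noncomputable def cartanMeasure (m n : ℕ) (c : ℝ) : Measure (Fin m → ℝ) :=
  (volume.restrict (angleCube m)).withDensity fun θ => ENNReal.ofReal (c * cartanDensity m n θ)

instance : SFinite (cartanMeasure m n c) := by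
  unfold cartanMeasure; infer_instance

theorem cartanMeasure_apply (hc : 0 ≤ c) {s : Set (Fin m → ℝ)} (hs : MeasurableSet s) :
    cartanMeasure m n c s = ENNReal.ofReal (c * ∫ θ in angleCube m ∩ s, cartanDensity m n θ) := by
  rw [cartanMeasure, withDensity_apply _ hs, Measure.restrict_restrict hs, inter_comm,
    ← integral_const_mul, ofReal_integral_eq_lintegral_ofReal]
  · exact ((continuous_const.mul continuous_cartanDensity).continuousOn.integrableOn_compact
      isCompact_angleCube).mono_set inter_subset_left
  · exact Eventually.of_forall fun θ => mul_nonneg hc (abs_nonneg _)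

theorem isProbabilityMeasure_cartanMeasure (hc : 0 ≤ c)
    (hc₁ : ∫ θ in angleCube m, c * cartanDensity m n θ = 1) :
    IsProbabilityMeasure (cartanMeasure m n c) :=
  ⟨by rw [cartanMeasure_apply hc MeasurableSet.univ, inter_univ, ← integral_const_mul, hc₁,
    ENNReal.ofReal_one]⟩

theorem cartanMeasure_prod_absolutelyContinuous {n' : ℕ} {c' : ℝ} :
    (cartanMeasure m n c).prod (cartanMeasure m n' c') ≪
      volume.restrict (angleCube m ×ˢ angleCube m) := by
  rw [Measure.volume_eq_prod, ← Measure.prod_restrict]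
  exact (withDensity_absolutelyContinuous _ _).prod (withDensity_absolutelyContinuous _ _)

theorem cartanMeasure_concentratesAt {c : ℕ → ℝ}
    (hc : ∀ n, 2 * m ≤ n → 0 < c n ∧ ∫ θ in angleCube m, c n * cartanDensity m n θ = 1) :
    ConcentratesAt atTop (fun n => cartanMeasure m n (c n)) fun _ => π / 2 := by
  intro ε hε
  rw [← ENNReal.ofReal_zero]
  refine (ENNReal.tendsto_ofReal
    (tendsto_setIntegral_cartanDensity_compl_ball_div (m := m) hε)).congr' ?_
  filter_upwards [eventually_ge_atTop (2 * m)] with n hn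
  obtain ⟨hcn, hc₁⟩ := hc n hn
  rw [integral_const_mul] at hc₁
  rw [cartanMeasure_apply hcn.le measurableSet_ball.compl, ← sdiff_eq,
    eq_inv_of_mul_eq_one_left hc₁, div_eq_inv_mul]

end Cartan

theorem cartan_density_concentration_general
    (m : ℕ) (c : ℕ → ℝ)
    (hc : ∀ n, 2 * m ≤ n → 0 < c n ∧
      ∫ θ in Set.univ.pi fun _ : Fin m => Set.Icc (0 : ℝ) Real.pi,
        c n * cartanDensity m n θ = 1)
    (f : (Fin m → ℝ) → (Fin m → ℝ) → ℝ)
    (hf : ContinuousOn (fun p : (Fin m → ℝ) × (Fin m → ℝ) => f p.1 p.2)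
      ((Set.univ.pi fun _ : Fin m => Set.Icc (0 : ℝ) Real.pi) ×ˢ
        (Set.univ.pi fun _ : Fin m => Set.Icc (0 : ℝ) Real.pi))) :
    Tendsto (fun n : ℕ =>
        ∫ θ in Set.univ.pi fun _ : Fin m => Set.Icc (0 : ℝ) Real.pi,
          ∫ ζ in Set.univ.pi fun _ : Fin m => Set.Icc (0 : ℝ) Real.pi,
            f θ ζ * (c n * cartanDensity m n θ) * (c n * cartanDensity m n ζ))
      atTop
      (nhds (f (fun _ => Real.pi / 2) (fun _ => Real.pi / 2))) := by
  set ν := fun n => cartanMeasure m n (c n)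
  have hS : IsCompact (angleCube m ×ˢ angleCube m) := isCompact_angleCube.prod isCompact_angleCube
  have hprob : ∀ᶠ n in atTop, IsProbabilityMeasure (ν n) := eventually_atTop.2
    ⟨2 * m, fun n hn => isProbabilityMeasure_cartanMeasure (hc n hn).1.le (hc n hn).2⟩
  have hmem : ∀ n, ∀ᵐ z ∂(ν n).prod (ν n), z ∈ angleCube m ×ˢ angleCube m := fun n =>
    cartanMeasure_prod_absolutelyContinuous.ae_le (ae_restrict_mem hS.isClosed.measurableSet)
  obtain ⟨M, hM⟩ := hS.exists_bound_of_continuousOn hf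
  have hint : ∀ᶠ n in atTop, Integrable (fun z => f z.1 z.2) ((ν n).prod (ν n)) := by
    filter_upwards [hprob] with n hn
    exact .of_bound ((hf.aestronglyMeasurable hS.isClosed.measurableSet).mono_ac
      cartanMeasure_prod_absolutelyContinuous) M ((hmem n).mono hM)
  have hp : (fun _ => π / 2 : Fin m → ℝ) ∈ angleCube m :=
    fun i _ => ⟨by positivity, by linarith [pi_pos]⟩
  have hconc := cartanMeasure_concentratesAt hc
  refine (tendsto_integral_of_concentratesAt (hconc.prod hconc hprob hprob)
    (hprob.mono fun n hn => inferInstance) hmem hM (hf (_, _) ⟨hp, hp⟩) hint).congr' ?_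
  filter_upwards [hint, eventually_ge_atTop (2 * m)] with n hn hn'
  exact integral_prod_withDensity_ofReal
    (continuous_const.mul continuous_cartanDensity).measurable
    (fun θ => mul_nonneg (hc n hn').1.le (abs_nonneg _)) hn

/-- With `D_{m,n} = c_{m,n} ·` `cartanDensity m n` a probability density on
`[0,π]^m` (for `n ≥ 2m`), for every continuous function `f` on `[0,π]^m × [0,π]^m`,
`lim_{n→∞} ∫∫ f(θ,ζ) D_{m,n}(θ) D_{m,n}(ζ) dθ dζ = f(π/2,…,π/2; π/2,…,π/2)`. -/
theorem cartan_density_concentration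
    (m : ℕ) (hm : 1 ≤ m) (c : ℕ → ℝ)
    (hc : ∀ n, 2 * m ≤ n → 0 < c n ∧
      ∫ θ in Set.univ.pi fun _ : Fin m => Set.Icc (0 : ℝ) Real.pi,
        c n * cartanDensity m n θ = 1)
    (f : (Fin m → ℝ) → (Fin m → ℝ) → ℝ)
    (hf : ContinuousOn (fun p : (Fin m → ℝ) × (Fin m → ℝ) => f p.1 p.2)
      ((Set.univ.pi fun _ : Fin m => Set.Icc (0 : ℝ) Real.pi) ×ˢ
        (Set.univ.pi fun _ : Fin m => Set.Icc (0 : ℝ) Real.pi))) :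
    Tendsto (fun n : ℕ =>
        ∫ θ in Set.univ.pi fun _ : Fin m => Set.Icc (0 : ℝ) Real.pi,
          ∫ ζ in Set.univ.pi fun _ : Fin m => Set.Icc (0 : ℝ) Real.pi,
            f θ ζ * (c n * cartanDensity m n θ) * (c n * cartanDensity m n ζ))
      atTop
      (nhds (f (fun _ => Real.pi / 2) (fun _ => Real.pi / 2))) :=
  cartan_density_concentration_general m c hc f hf
end

section
/- Let μ be a positive Borel measure on (0,∞) such that μ([a,∞)) is a natural number for every a > 0. Then there exist N ∈ ℕ ∪ {∞} and positive real numbers (α_k)_{1 ≤ k < N+1} such that μ = Σ_k δ_{α_k} (the sum of Dirac masses at the points α_k, repeated according to multiplicity); moreover, if N = ∞ then the sequence (α_k) converges to 0. -/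
/-!
`F a = μ [a, ∞)` is a nonincreasing `ℕ`-valued function on `(0, ∞)`. By continuity from above it
tends to `0` at `∞` and to `F a` as `b ↑ a`; being integer-valued, it is therefore `0` for large `a`
and constant just to the left of each `a`. Hence `α_k = sup {a | k < F a}` satisfies
`a ≤ α_k ↔ k < F a`, so `∑ δ_{α_k}` gives `[a, ∞)` the same (finite) mass `F a` as `μ`, and the two
measures agree. If there are infinitely many atoms, `α_k < ε` as soon as `k ≥ F ε`.
-/

open MeasureTheory Filter

open Set Topology

open scoped ENNReal

local notation "ℝ₊" => {x : ℝ // 0 < x}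

instance : OrderTopology ℝ₊ := orderTopology_of_ordConnected (t := Ioi 0)

instance : NoMaxOrder ℝ₊ := inferInstanceAs (NoMaxOrder (Ioi (0 : ℝ)))

namespace MeasureTheory

variable {α : Type*} [MeasurableSpace α]

theorem exists_measure_eq_measure_iInter_of_antitone {μ : Measure α} {s : ℕ → Set α}
    (hs : ∀ n, NullMeasurableSet (s n) μ) (hanti : Antitone s)
    (hnat : ∀ n, ∃ m : ℕ, μ (s n) = m) : ∃ n, μ (s n) = μ (⋂ i, s i) := by
  choose m hm using hnat
  refine ⟨Function.argmin m, le_antisymm ?_ (measure_mono (iInter_subset s _))⟩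
  rw [hanti.measure_iInter hs ⟨0, by simp [hm]⟩]
  refine le_iInf fun n => ?_
  rw [hm, hm]
  exact_mod_cast Function.argmin_le m n

theorem Measure.ext_of_Ici' [TopologicalSpace α] [SecondCountableTopology α] [LinearOrder α]
    [OrderTopology α] [BorelSpace α] [NoMaxOrder α] (μ ν : Measure α)
    (hμ : ∀ a, μ (Ici a) ≠ ∞) (h : ∀ a, μ (Ici a) = ν (Ici a)) : μ = ν := by
  refine ext_of_Ico' μ ν
    (fun a _ _ => ne_top_of_le_ne_top (hμ a) (measure_mono Ico_subset_Ici_self)) fun a b hab => ?_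
  have hsub : Ici b ⊆ Ici a := Ici_subset_Ici.2 hab.le
  rw [← Ici_sdiff_Ici, measure_sdiff hsub measurableSet_Ici.nullMeasurableSet (hμ b),
    measure_sdiff hsub measurableSet_Ici.nullMeasurableSet (h b ▸ hμ b), h a, h b]

theorem Measure.sum_dirac_apply {ι : Type*} (f : ι → α) {s : Set α} (hs : MeasurableSet s) :
    Measure.sum (fun i => dirac (f i)) s = (f ⁻¹' s).encard := by
  simp only [Measure.sum_apply _ hs, Measure.dirac_apply' _ hs]
  rw [← ENNReal.tsum_set_one, tsum_subtype (f ⁻¹' s) fun _ => (1 : ℝ≥0∞)]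
  rfl

end MeasureTheory

/-- The left-constancy `hleft` is what puts `a` into the set as soon as `a ≤ sSup`. -/
theorem Antitone.le_sSup_setOf_lt_iff {β : Type*} [Preorder β] {F : ℝ → β} (hF : Antitone F)
    {t : β} (hbdd : ∃ c, F c ≤ t) {a : ℝ} (ha : 0 < a) (hleft : ∃ b < a, F b = F a) :
    a ≤ sSup {b | t < F b} ↔ t < F a := by
  obtain ⟨c, hc⟩ := hbdd
  have hS : BddAbove {b | t < F b} :=
    ⟨c, fun b hb => le_of_not_gt fun hcb => (hb.trans_le ((hF hcb.le).trans hc)).false⟩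
  refine ⟨fun hle => ?_, fun hlt => le_csSup hS hlt⟩
  obtain ⟨b, hba, hb⟩ := hleft
  have hne : {b | t < F b}.Nonempty := by
    by_contra hemp
    rw [not_nonempty_iff_eq_empty.1 hemp, Real.sSup_empty] at hle
    linarith
  obtain ⟨c', hc', hbc'⟩ := exists_lt_of_lt_csSup hne (hba.trans_le hle)
  exact hb ▸ hc'.trans_le (hF hbc'.le)

def tailMass (μ : Measure ℝ₊) (a : ℝ) : ℝ≥0∞ := μ {x | a ≤ (x : ℝ)}

def HasNatTails (μ : Measure ℝ₊) : Prop :=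
  ∀ a : ℝ, 0 < a → ∃ m : ℕ, tailMass μ a = m

/-- The `(k+1)`-st largest atom of `μ`, counted with multiplicity; `0` (as `sSup ∅`) if `μ` has
at most `k` atoms. -/
noncomputable def atom (μ : Measure ℝ₊) (k : ℕ) : ℝ := sSup {b | (k : ℝ≥0∞) < tailMass μ b}

noncomputable def atomCount (μ : Measure ℝ₊) : ℕ∞ :=
  ⨆ (k : ℕ) (_ : 0 < atom μ k), (k + 1 : ℕ∞)

variable {μ : Measure ℝ₊}

theorem tailMass_antitone : Antitone (tailMass μ) :=
  fun _ _ hab => measure_mono fun _ hx => hab.trans hx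

theorem measurableSet_le_coe (a : ℝ) : MeasurableSet {x : ℝ₊ | a ≤ (x : ℝ)} :=
  measurable_subtype_coe measurableSet_Ici

theorem exists_tailMass_eq_zero (h : HasNatTails μ) : ∃ c, tailMass μ c = 0 := by
  have hempty : ⋂ n : ℕ, {x : ℝ₊ | (n : ℝ) + 1 ≤ (x : ℝ)} = ∅ := by
    refine eq_empty_of_forall_notMem fun x hx => ?_
    obtain ⟨n, hn⟩ := exists_nat_gt (x : ℝ)
    have hnx : (n : ℝ) + 1 ≤ x := mem_iInter.1 hx n
    linarith
  obtain ⟨n, hn⟩ := exists_measure_eq_measure_iInter_of_antitone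
    (s := fun n : ℕ => {x : ℝ₊ | (n : ℝ) + 1 ≤ (x : ℝ)})
    (fun n => (measurableSet_le_coe _).nullMeasurableSet)
    (fun m n hmn x (hx : (n : ℝ) + 1 ≤ x) => le_trans (by gcongr) hx)
    (fun n => h ((n : ℝ) + 1) (by positivity))
  exact ⟨n + 1, by rwa [hempty, measure_empty] at hn⟩

theorem exists_lt_tailMass_eq (h : HasNatTails μ) {a : ℝ} (ha : 0 < a) :
    ∃ b < a, tailMass μ b = tailMass μ a := by
  obtain ⟨u, hu_mono, hu_mem, hu_lim⟩ := exists_seq_strictMono_tendsto' ha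
  have hinter : ⋂ n, {x : ℝ₊ | u n ≤ (x : ℝ)} = {x : ℝ₊ | a ≤ (x : ℝ)} := by
    ext x
    simp only [mem_iInter, mem_ofPred_eq]
    exact ⟨le_of_tendsto' hu_lim, fun hx n => (hu_mem n).2.le.trans hx⟩
  obtain ⟨n, hn⟩ := exists_measure_eq_measure_iInter_of_antitone
    (s := fun n => {x : ℝ₊ | u n ≤ (x : ℝ)})
    (fun n => (measurableSet_le_coe _).nullMeasurableSet)
    (fun m n hmn x (hx : u n ≤ (x : ℝ)) => (hu_mono.monotone hmn).trans hx)
    (fun n => h (u n) (hu_mem n).1)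
  exact ⟨u n, (hu_mem n).2, hn.trans (congrArg μ hinter)⟩

theorem le_atom_iff (h : HasNatTails μ) (k : ℕ) {a : ℝ} (ha : 0 < a) :
    a ≤ atom μ k ↔ (k : ℝ≥0∞) < tailMass μ a :=
  let ⟨c, hc⟩ := exists_tailMass_eq_zero h
  tailMass_antitone.le_sSup_setOf_lt_iff ⟨c, hc.le.trans (Nat.cast_nonneg k)⟩ ha
    (exists_lt_tailMass_eq h ha)

theorem atom_pos_of_le (h : HasNatTails μ) {j k : ℕ} (hkj : k ≤ j) (hj : 0 < atom μ j) :
    0 < atom μ k := by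
  have hjF := (le_atom_iff h j hj).1 le_rfl
  exact hj.trans_le ((le_atom_iff h k hj).2 (lt_of_le_of_lt (by exact_mod_cast hkj) hjF))

theorem natCast_lt_atomCount_iff (h : HasNatTails μ) (k : ℕ) :
    (k : ℕ∞) < atomCount μ ↔ 0 < atom μ k := by
  refine ⟨fun hk => ?_, fun hk => ?_⟩
  · obtain ⟨j, hj⟩ := lt_iSup_iff.1 hk
    obtain ⟨hj, hkj⟩ := lt_iSup_iff.1 hj
    exact atom_pos_of_le h (by exact_mod_cast ENat.natCast_lt_add_one_iff.1 hkj) hj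
  · exact (ENat.natCast_lt_add_one_iff.2 le_rfl).trans_le
      (le_iSup₂ (f := fun j (_ : 0 < atom μ j) => (j + 1 : ℕ∞)) k hk)

theorem tendsto_atom_nhds_zero (h : HasNatTails μ) (hN : atomCount μ = ⊤) :
    Tendsto (atom μ) atTop (𝓝 0) := by
  have hpos : ∀ k, 0 < atom μ k := fun k =>
    (natCast_lt_atomCount_iff h k).1 (hN ▸ ENat.natCast_lt_top k)
  refine tendsto_order.2 ⟨fun a ha => Eventually.of_forall fun k => ha.trans (hpos k),
    fun ε hε => ?_⟩
  obtain ⟨m, hm⟩ := h ε hε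
  refine eventually_atTop.2 ⟨m, fun k hk => lt_of_not_ge fun hεk => ?_⟩
  have := (le_atom_iff h k hε).1 hεk
  rw [hm, Nat.cast_lt] at this
  omega

theorem eq_sum_dirac_atom (h : HasNatTails μ) (α : ℕ → ℝ₊)
    (hα : ∀ k : ℕ, (k : ℕ∞) < atomCount μ → (α k : ℝ) = atom μ k) :
    μ = Measure.sum (fun k : {k : ℕ // (k : ℕ∞) < atomCount μ} => Measure.dirac (α k.1)) := by
  refine Measure.ext_of_Ici' _ _ (fun a => ?_) fun a => ?_
  · obtain ⟨m, hm⟩ := h a a.2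
    change tailMass μ a ≠ ∞
    exact hm ▸ ENNReal.natCast_ne_top m
  obtain ⟨m, hm⟩ := h a a.2
  have hcount : {k : ℕ | (k : ℕ∞) < atomCount μ ∧ a ≤ α k} = {k | k < m} := by
    ext k
    simp only [mem_ofPred_eq, ← Subtype.coe_le_coe]
    rw [← Nat.cast_lt (α := ℝ≥0∞), ← hm, ← le_atom_iff h k a.2]
    constructor
    · rintro ⟨hk, hak⟩
      exact hα k hk ▸ hak
    · intro hak
      have hk := (natCast_lt_atomCount_iff h k).2 (a.2.trans_le hak)
      exact ⟨hk, (hα k hk).symm ▸ hak⟩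
  have himage : Subtype.val '' ((fun k : {k : ℕ // (k : ℕ∞) < atomCount μ} => α k.1) ⁻¹' Ici a)
      = {k : ℕ | (k : ℕ∞) < atomCount μ ∧ a ≤ α k} := by
    ext k
    simp [and_comm]
  rw [Measure.sum_dirac_apply _ measurableSet_Ici, ← Subtype.val_injective.encard_image, himage,
    hcount, Nat.encard_range]
  exact hm

/-- A positive Borel measure `μ` on `(0,∞)` such that `μ([a,∞)) ∈ ℕ` for every
`a > 0` is a (finite or countable) sum of Dirac masses at positive points `α_k`; moreover if there
are infinitely many points, the sequence `(α_k)` tends to `0`. -/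
theorem integer_valued_measure_is_sum_of_diracs
    (μ : Measure {x : ℝ // 0 < x})
    (h : ∀ a : ℝ, 0 < a → ∃ m : ℕ, μ {x : {x : ℝ // 0 < x} | a ≤ (x : ℝ)} = m) :
    ∃ (N : ℕ∞) (α : ℕ → {x : ℝ // 0 < x}),
      μ = Measure.sum (fun k : {k : ℕ // (k : ℕ∞) < N} => Measure.dirac (α k.1)) ∧
      (N = ⊤ → Tendsto (fun k => ((α k : ℝ))) atTop (nhds 0)) := by
  let α : ℕ → {x : ℝ // 0 < x} := fun k => if hk : 0 < atom μ k then ⟨atom μ k, hk⟩ else 1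
  have hα : ∀ k : ℕ, (k : ℕ∞) < atomCount μ → (α k : ℝ) = atom μ k := fun k hk => by
    simp [α, (natCast_lt_atomCount_iff h k).1 hk]
  refine ⟨atomCount μ, α, eq_sum_dirac_atom h α hα, fun hN => ?_⟩
  have hα_top : (fun k => (α k : ℝ)) = atom μ := funext fun k => hα k (hN ▸ ENat.natCast_lt_top k)
  exact hα_top ▸ tendsto_atom_nhds_zero h hN
end

section
/- Let Ω be the set of parameters ω = (α, γ) where α = (α_j)_{j≥1} is a summable sequence of nonnegative reals and γ ≥ 0, and for ω ∈ Ω let σ_ω be the finite positive measure on [0,∞) given by σ_ω = γδ₀ + Σ_{j=1}^∞ α_j δ_{α_j}. Then the family {σ_ω : ω ∈ Ω} is weakly closed in the set of finite positive measures on [0,∞): if ω⁽ⁿ⁾ = (α⁽ⁿ⁾, γ⁽ⁿ⁾) is a sequence in Ω and σ is a finite positive measure on [0,∞) such that for every bounded continuous function f on [0,∞), lim_{n→∞} ( γ⁽ⁿ⁾ f(0) + Σ_{k=1}^∞ α_k⁽ⁿ⁾ f(α_k⁽ⁿ⁾) ) = ∫_{[0,∞)} f dσ, then there exists ω = (α,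 γ) ∈ Ω with σ = γδ₀ + Σ_{k=1}^∞ α_k δ_{α_k}. -/
/-!
Test functions supported in a window around `y > 0` kill the term `γ⁽ⁿ⁾ f(0)`, and
`Σ_k α_k⁽ⁿ⁾ f(α_k⁽ⁿ⁾)` is then squeezed between `(y ∓ ε)` times the number of indices `k` with
`α_k⁽ⁿ⁾` near `y`. Shrinking the window, `σ{y}` is a limit of integer multiples of `y`, hence lies
in `ℕ y`, and a point `y > 0` that is not an atom has a `σ`-null neighbourhood. So on `(0, ∞)`
the measure `σ` is carried by countably many atoms `y` of masses `m_y y`; listing each atom `m_y`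
times gives `α`, and `γ = σ{0}`.
-/

open MeasureTheory Filter Set Topology
open scoped ENNReal

theorem exists_continuous_indicator_le_le_indicator {X : Type*} [TopologicalSpace X]
    [NormalSpace X] {s t : Set X} (hs : IsClosed s) (ht : IsOpen t) (hst : s ⊆ t) :
    ∃ f : X → ℝ, Continuous f ∧ s.indicator 1 ≤ f ∧ f ≤ t.indicator 1 := by
  obtain ⟨f, hf0, hf1, hf⟩ := exists_continuous_zero_one_of_isClosed ht.isClosed_compl hs
    (disjoint_compl_left_iff_subset.2 hst)
  refine ⟨f, f.continuous, fun x => ?_, fun x => ?_⟩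
  · by_cases hx : x ∈ s
    · simp [hx, hf1 hx]
    · simpa [hx] using (hf x).1
  · by_cases hx : x ∈ t
    · simpa [hx] using (hf x).2
    · simp [hx, hf0 (mem_compl hx)]

section IndicatorSandwich

variable {X : Type*} {f : X → ℝ} {s t : Set X}

theorem mem_Icc_of_indicator_le_of_le_indicator (hs : s.indicator 1 ≤ f)
    (ht : f ≤ t.indicator 1) (x : X) : f x ∈ Icc 0 1 :=
  ⟨(indicator_nonneg (fun _ _ => zero_le_one) x).trans (hs x),
    (ht x).trans (indicator_le_self' (fun _ _ => zero_le_one) x)⟩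

theorem eq_zero_of_le_indicator_of_notMem (hs : s.indicator 1 ≤ f)
    (ht : f ≤ t.indicator 1) {x : X} (hx : x ∉ t) : f x = 0 :=
  le_antisymm (by simpa [hx] using ht x) (mem_Icc_of_indicator_le_of_le_indicator hs ht x).1

variable [MeasurableSpace X] {μ : Measure X} [IsFiniteMeasure μ]

theorem measureReal_le_integral_of_indicator_le (hs : MeasurableSet s)
    (hf : Integrable f μ) (h : s.indicator 1 ≤ f) : μ.real s ≤ ∫ x, f x ∂μ := by
  rw [← integral_indicator_one hs]
  exact integral_mono ((integrable_const 1).indicator hs) hf h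

theorem integral_le_measureReal_of_le_indicator (ht : MeasurableSet t)
    (hf : Integrable f μ) (h : f ≤ t.indicator 1) : ∫ x, f x ∂μ ≤ μ.real t := by
  rw [← integral_indicator_one ht]
  exact integral_mono hf ((integrable_const 1).indicator ht) h

theorem integrable_of_indicator_le_of_le_indicator (hf : AEStronglyMeasurable f μ)
    (hs : s.indicator 1 ≤ f) (ht : f ≤ t.indicator 1) : Integrable f μ :=
  .of_bound hf 1 (ae_of_all _ fun x => by
    have := mem_Icc_of_indicator_le_of_le_indicator hs ht x
    rw [Real.norm_of_nonneg this.1]; exact this.2)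

end IndicatorSandwich

theorem Summable.finite_setOf_le {a : ℕ → ℝ} (ha : Summable a) {l : ℝ} (hl : 0 < l) :
    {k | l ≤ a k}.Finite := by
  have := (ha.tendsto_cofinite_zero.eventually (gt_mem_nhds hl))
  simpa [Filter.eventually_cofinite] using this

section CountingBounds

variable {a : ℕ → ℝ} {f : ℝ → ℝ} {s t : Set ℝ}

theorem mul_ncard_le_tsum_mul (ha : Summable a) (ha0 : ∀ k, 0 ≤ a k)
    (hs : s.indicator 1 ≤ f) (ht : f ≤ t.indicator 1) {p : ℝ} (hp : 0 < p) (hsp : s ⊆ Ici p) :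
    p * {k | a k ∈ s}.ncard ≤ ∑' k, a k * f (a k) := by
  have hf := mem_Icc_of_indicator_le_of_le_indicator hs ht
  have hfin : {k | a k ∈ s}.Finite := (ha.finite_setOf_le hp).subset fun k hk => hsp hk
  have hsum : Summable fun k => a k * f (a k) :=
    .of_nonneg_of_le (fun k => mul_nonneg (ha0 k) (hf _).1)
      (fun k => mul_le_of_le_one_right (ha0 k) (hf _).2) ha
  calc p * {k | a k ∈ s}.ncard = ∑ _k ∈ hfin.toFinset, p := by
        simp [ncard_eq_toFinset_card _ hfin, mul_comm]
    _ ≤ ∑ k ∈ hfin.toFinset, a k * f (a k) := by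
        refine Finset.sum_le_sum fun k hk => ?_
        rw [hfin.mem_toFinset] at hk
        have h1 : f (a k) = 1 :=
          le_antisymm (hf _).2 (by simpa [indicator_of_mem (show a k ∈ s from hk)] using hs (a k))
        simpa [h1] using hsp hk
    _ ≤ ∑' k, a k * f (a k) :=
        hsum.sum_le_tsum _ fun k _ => mul_nonneg (ha0 k) (hf _).1

theorem tsum_mul_le_mul_ncard (ha : Summable a) (ha0 : ∀ k, 0 ≤ a k)
    (hs : s.indicator 1 ≤ f) (ht : f ≤ t.indicator 1) {l r : ℝ} (hl : 0 < l)
    (htr : t ⊆ Icc l r) :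
    ∑' k, a k * f (a k) ≤ r * {k | a k ∈ t}.ncard := by
  have hf := mem_Icc_of_indicator_le_of_le_indicator hs ht
  have hfin : {k | a k ∈ t}.Finite := (ha.finite_setOf_le hl).subset fun k hk => (htr hk).1
  rw [tsum_eq_sum (s := hfin.toFinset) fun k hk => by
    rw [eq_zero_of_le_indicator_of_notMem hs ht (by simpa using hk), mul_zero]]
  calc ∑ k ∈ hfin.toFinset, a k * f (a k) ≤ ∑ _k ∈ hfin.toFinset, r := by
        refine Finset.sum_le_sum fun k hk => ?_
        rw [hfin.mem_toFinset] at hk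
        exact (mul_le_of_le_one_right (ha0 k) (hf _).2).trans (htr hk).2
    _ = r * {k | a k ∈ t}.ncard := by
        simp [ncard_eq_toFinset_card _ hfin, mul_comm]

end CountingBounds

namespace MeasureTheory.Measure

variable {X : Type*} [MeasurableSpace X]

theorem sum_sigma {ι : Type*} {κ : ι → Type*} (μ : (i : ι) → κ i → Measure X) :
    sum (fun p : Σ i, κ i => μ p.1 p.2) = sum fun i => sum (μ i) := by
  ext s hs
  simp [sum_apply _ hs, ENNReal.tsum_sigma']

theorem restrict_eq_sum_smul_dirac [MeasurableSingletonClass X] (μ : Measure X) {S : Set X}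
    (hS : S.Countable) : μ.restrict S = sum fun y : S => μ {(y : X)} • dirac (y : X) := by
  have := hS.to_subtype
  conv_lhs => rw [← iUnion_of_singleton_coe S]
  rw [restrict_iUnion (fun y z hyz => disjoint_singleton.2 (Subtype.coe_injective.ne hyz))
    fun _ => measurableSet_singleton _]
  simp

theorem eq_dirac_add_restrict_Ioi [LinearOrder X]
    [TopologicalSpace X] [OrderClosedTopology X] [OpensMeasurableSpace X]
    (μ : Measure X) {x : X} (hμ : μ (Iio x) = 0) :
    μ = μ {x} • dirac x + μ.restrict (Ioi x) := by
  have hIci : μ.restrict (Ici x) = μ :=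
    restrict_eq_self_of_ae_mem <|
      (measure_eq_zero_iff_ae_notMem.1 hμ).mono fun y hy => not_lt.1 hy
  rw [← Ioi_insert, insert_eq, restrict_union (by simp) measurableSet_Ioi,
    restrict_singleton] at hIci
  exact hIci.symm

theorem exists_seq_sum_comp_eq_sum_nsmul {β ι : Type*} [Zero β] [Countable ι]
    (ν : β → Measure X) (hν : ν 0 = 0) (v : ι → β) (m : ι → ℕ) :
    ∃ α : ℕ → β, range α ⊆ insert 0 (range v) ∧
      sum (fun k => ν (α k)) = sum fun i => m i • ν (v i) := by
  obtain ⟨e, he⟩ := Countable.exists_injective_nat (Σ i, Fin (m i))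
  refine ⟨Function.extend e (fun p => v p.1) 0, ?_, ?_⟩
  · rintro _ ⟨k, rfl⟩
    by_cases hk : ∃ p, e p = k
    · obtain ⟨p, rfl⟩ := hk
      simp [he.extend_apply]
    · simp [Function.extend_apply' _ _ _ hk]
  · have : (fun k => ν (Function.extend e (fun p => v p.1) 0 k)) =
        Function.extend e (fun p : Σ i, Fin (m i) => ν (v p.1)) 0 := by
      ext1 k
      rw [Function.apply_extend ν]
      congr
      exact funext fun _ => hν
    rw [this, sum_extend_zero he, sum_sigma (fun i (_ : Fin (m i)) => ν (v i))]
    simp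

end MeasureTheory.Measure

theorem summable_of_tsum_ofReal_ne_top {ι : Type*} {a : ι → ℝ} (h0 : ∀ k, 0 ≤ a k)
    (h : ∑' k, ENNReal.ofReal (a k) ≠ ∞) : Summable a :=
  (ENNReal.summable_toReal h).congr fun k => ENNReal.toReal_ofReal (h0 k)

theorem tendsto_measureReal_Ioo_nhdsGT_zero (μ : Measure ℝ) [IsFiniteMeasure μ] (y : ℝ) :
    Tendsto (fun r => μ.real (Ioo (y - r) (y + r))) (𝓝[>] 0) (𝓝 (μ.real {y})) := by
  have := tendsto_measure_thickening_of_isClosed (μ := μ) ⟨1, one_pos, measure_ne_top _ _⟩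
    (isClosed_singleton (x := y))
  simp only [Metric.thickening_singleton, Real.ball_eq_Ioo] at this
  exact (ENNReal.tendsto_toReal (measure_ne_top _ _)).comp this

/-- `σ_{ω⁽ⁿ⁾} → σ` weakly for `ω⁽ⁿ⁾ = (a n, g n)`, with `∫ f dσ_ω` written out. -/
def IsPolyaWeakLimit (a : ℕ → ℕ → ℝ) (g : ℕ → ℝ) (σ : Measure ℝ) : Prop :=
  ∀ f : ℝ → ℝ, Continuous f → (∃ C : ℝ, ∀ x, |f x| ≤ C) →
    Tendsto (fun n => g n * f 0 + ∑' k, a n k * f (a n k)) atTop (𝓝 (∫ x, f x ∂σ))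

namespace IsPolyaWeakLimit

variable {a : ℕ → ℕ → ℝ} {g : ℕ → ℝ} {σ : Measure ℝ}

theorem tendsto_tsum (h : IsPolyaWeakLimit a g σ) {f : ℝ → ℝ} {s t : Set ℝ} (hf : Continuous f)
    (hs : s.indicator 1 ≤ f) (ht : f ≤ t.indicator 1) (h0 : (0 : ℝ) ∉ t) :
    Tendsto (fun n => ∑' k, a n k * f (a n k)) atTop (𝓝 (∫ x, f x ∂σ)) := by
  have hbound : ∀ x, |f x| ≤ 1 := fun x => by
    have := mem_Icc_of_indicator_le_of_le_indicator hs ht x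
    rw [abs_of_nonneg this.1]; exact this.2
  simpa [eq_zero_of_le_indicator_of_notMem hs ht h0] using h f hf ⟨1, hbound⟩

variable [IsFiniteMeasure σ]

theorem exists_count_sandwich (h : IsPolyaWeakLimit a g σ) (ha : ∀ n, Summable (a n))
    (ha0 : ∀ n k, 0 ≤ a n k) {y ε δ : ℝ} (hε : 0 < ε) (hεy : 3 * ε < y) (hδ : 0 < δ) :
    ∃ c : ℕ, (y - 2 * ε) * c ≤ σ.real (Ioo (y - 3 * ε) (y + 3 * ε)) + δ ∧
      σ.real (Icc (y - ε) (y + ε)) ≤ (y + 2 * ε) * c + δ := by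
  -- `c` counts the `a n k` in the middle window; bumps from it to the outer window and from the
  -- inner window to it compare `c` with `σ`.
  obtain ⟨f₁, hf₁, hs₁, ht₁⟩ := exists_continuous_indicator_le_le_indicator isClosed_Icc
    isOpen_Ioo (Icc_subset_Ioo (by linarith : y - 3 * ε < y - 2 * ε)
      (by linarith : y + 2 * ε < y + 3 * ε))
  obtain ⟨f₂, hf₂, hs₂, ht₂⟩ := exists_continuous_indicator_le_le_indicator isClosed_Icc
    isOpen_Ioo (Icc_subset_Ioo (by linarith : y - 2 * ε < y - ε)
      (by linarith : y + ε < y + 2 * ε))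
  have hint₁ := integrable_of_indicator_le_of_le_indicator (μ := σ)
    hf₁.aestronglyMeasurable hs₁ ht₁
  have hint₂ := integrable_of_indicator_le_of_le_indicator (μ := σ)
    hf₂.aestronglyMeasurable hs₂ ht₂
  have hlim₁ := h.tendsto_tsum hf₁ hs₁ ht₁ fun h0 => by linarith [h0.1]
  have hlim₂ := h.tendsto_tsum hf₂ hs₂ ht₂ fun h0 => by linarith [h0.1]
  obtain ⟨n, hn₁, hn₂⟩ := ((hlim₁.eventually (gt_mem_nhds (lt_add_of_pos_right _ hδ))).and
    (hlim₂.eventually (lt_mem_nhds (sub_lt_self _ hδ)))).exists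
  refine ⟨{k | a n k ∈ Icc (y - 2 * ε) (y + 2 * ε)}.ncard, ?_, ?_⟩
  · calc (y - 2 * ε) * {k | a n k ∈ Icc (y - 2 * ε) (y + 2 * ε)}.ncard
        ≤ ∑' k, a n k * f₁ (a n k) :=
          mul_ncard_le_tsum_mul (ha n) (ha0 n) hs₁ ht₁ (by linarith) fun x hx => hx.1
      _ ≤ ∫ x, f₁ x ∂σ + δ := hn₁.le
      _ ≤ σ.real (Ioo (y - 3 * ε) (y + 3 * ε)) + δ := by
          gcongr; exact integral_le_measureReal_of_le_indicator measurableSet_Ioo hint₁ ht₁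
  · have ht₂' : f₂ ≤ (Icc (y - 2 * ε) (y + 2 * ε)).indicator 1 := ht₂.trans
      (indicator_le_indicator_of_subset Ioo_subset_Icc_self fun _ => zero_le_one)
    calc σ.real (Icc (y - ε) (y + ε)) ≤ ∫ x, f₂ x ∂σ :=
          measureReal_le_integral_of_indicator_le measurableSet_Icc hint₂ hs₂
      _ ≤ ∑' k, a n k * f₂ (a n k) + δ := by linarith
      _ ≤ (y + 2 * ε) * {k | a n k ∈ Icc (y - 2 * ε) (y + 2 * ε)}.ncard + δ := by
          gcongr; exact tsum_mul_le_mul_ncard (ha n) (ha0 n) hs₂ ht₂' (by linarith) subset_rfl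

theorem exists_measureReal_singleton_eq_nat_mul (h : IsPolyaWeakLimit a g σ)
    (ha : ∀ n, Summable (a n)) (ha0 : ∀ n k, 0 ≤ a n k) {y : ℝ} (hy : 0 < y) :
    ∃ m : ℕ, σ.real {y} = m * y := by
  -- With `δ = ε`, the counts converge to `σ{y} / y` as `ε → 0`, and `ℕ` is closed in `ℝ`.
  have hsmall : ∀ᶠ ε in 𝓝[>] (0 : ℝ), 0 < ε ∧ 3 * ε < y :=
    (eventually_mem_nhdsWithin).and (nhdsWithin_le_nhds (Iio_mem_nhds (by positivity : 0 < y / 3)))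
      |>.mono fun ε hε => ⟨hε.1, by linarith [show ε < y / 3 from hε.2]⟩
  choose! c hc₁ hc₂ using fun ε (hε : 0 < ε ∧ 3 * ε < y) =>
    h.exists_count_sandwich ha ha0 hε.1 hε.2 hε.1
  set s := σ.real {y}
  have hw : Tendsto (fun ε => σ.real (Ioo (y - 3 * ε) (y + 3 * ε))) (𝓝[>] 0) (𝓝 s) :=
    (tendsto_measureReal_Ioo_nhdsGT_zero σ y).comp
      (tendsto_iff_comap.2 (comap_mulLeft_nhdsGT_zero three_pos).ge)
  have hε0 : Tendsto (fun ε : ℝ => ε) (𝓝[>] 0) (𝓝 0) := nhdsWithin_le_nhds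
  have hlow : Tendsto (fun ε => (s - ε) / (y + 2 * ε)) (𝓝[>] 0) (𝓝 (s / y)) := by
    convert ((tendsto_const_nhds (x := s)).sub hε0).div
      ((tendsto_const_nhds (x := y)).add (hε0.const_mul 2)) (by simpa using hy.ne') using 2 <;> simp
  have hup : Tendsto (fun ε => (σ.real (Ioo (y - 3 * ε) (y + 3 * ε)) + ε) / (y - 2 * ε))
      (𝓝[>] 0) (𝓝 (s / y)) := by
    convert (hw.add hε0).div (tendsto_const_nhds.sub (hε0.const_mul 2))
      (by simpa using hy.ne') using 2 <;> simp
  have hc : Tendsto (fun ε => (c ε : ℝ)) (𝓝[>] 0) (𝓝 (s / y)) := by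
    refine tendsto_of_tendsto_of_tendsto_of_le_of_le' hlow hup
      (hsmall.mono fun ε hε => ?_) (hsmall.mono fun ε hε => ?_)
    · have : s ≤ σ.real (Icc (y - ε) (y + ε)) :=
        measureReal_mono (singleton_subset_iff.2 ⟨by linarith [hε.1], by linarith [hε.1]⟩)
      rw [div_le_iff₀ (by linarith [hε.1])]
      linarith [hc₂ ε hε]
    · rw [le_div_iff₀ (by linarith [hε.1])]
      linarith [hc₁ ε hε]
  obtain ⟨m, hm⟩ := Nat.isClosedEmbedding_coe_real.isClosed_range.mem_of_tendsto hc
    (Eventually.of_forall fun ε => mem_range_self _)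
  exact ⟨m, by rw [hm, div_mul_cancel₀ _ hy.ne']⟩

theorem exists_nhds_measure_eq_zero (h : IsPolyaWeakLimit a g σ)
    (ha : ∀ n, Summable (a n)) (ha0 : ∀ n k, 0 ≤ a n k) {y : ℝ} (hy : 0 < y)
    (hσy : σ {y} = 0) : ∃ u ∈ 𝓝 y, σ u = 0 := by
  -- Once the outer window has mass `< y / 4` the count vanishes, so the inner window has mass
  -- at most `δ` for every `δ > 0`.
  have hw : ∀ᶠ ε in 𝓝[>] (0 : ℝ), σ.real (Ioo (y - 3 * ε) (y + 3 * ε)) < y / 4 := by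
    have := (tendsto_measureReal_Ioo_nhdsGT_zero σ y).comp
      (tendsto_iff_comap.2 (comap_mulLeft_nhdsGT_zero three_pos).ge)
    simp only [measureReal_def, hσy, ENNReal.toReal_zero] at this
    exact this.eventually (gt_mem_nhds (by positivity))
  obtain ⟨ε, hεw, hε, hεy⟩ := (hw.and ((eventually_mem_nhdsWithin).and
    (nhdsWithin_le_nhds (Iio_mem_nhds (by positivity : 0 < y / 4))))).exists
  simp only [mem_Ioi] at hε hεy
  refine ⟨Icc (y - ε) (y + ε), Icc_mem_nhds (by linarith) (by linarith), ?_⟩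
  rw [← measureReal_eq_zero_iff]
  refine le_antisymm (le_of_forall_pos_le_add fun δ hδ => ?_) measureReal_nonneg
  obtain ⟨c, hc₁, hc₂⟩ := h.exists_count_sandwich ha ha0 (y := y) (δ := min δ (y / 8)) hε
    (by linarith) (lt_min hδ (by positivity))
  have hc : c = 0 := by
    by_contra hc
    have : (1 : ℝ) ≤ c := Nat.one_le_cast.2 (Nat.pos_of_ne_zero hc)
    nlinarith [min_le_right δ (y / 8)]
  simp only [hc, Nat.cast_zero, mul_zero, zero_add] at hc₂
  linarith [min_le_left δ (y / 8)]

end IsPolyaWeakLimit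

theorem exists_polya_parameters_of_atoms (σ : Measure ℝ) [IsFiniteMeasure σ]
    (hσ : σ (Iio 0) = 0) {S : Set ℝ} (hS : S.Countable) (hS0 : S ⊆ Ioi 0)
    (hnull : σ (Ioi 0 \ S) = 0) (m : S → ℕ) (hm : ∀ y : S, σ.real {(y : ℝ)} = m y * y) :
    ∃ (α : ℕ → ℝ) (γ : ℝ), Summable α ∧ (∀ k, 0 ≤ α k) ∧ 0 ≤ γ ∧
      σ = ENNReal.ofReal γ • Measure.dirac (0 : ℝ) +
        Measure.sum (fun k : ℕ => ENNReal.ofReal (α k) • Measure.dirac (α k)) := by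
  have := hS.to_subtype
  obtain ⟨α, hα, hσα⟩ := Measure.exists_seq_sum_comp_eq_sum_nsmul
    (fun x : ℝ => ENNReal.ofReal x • Measure.dirac x) (by simp) (fun y : S => (y : ℝ)) m
  have hα0 : ∀ k, 0 ≤ α k := fun k => by
    rcases hα (mem_range_self k) with h0 | ⟨y, hy⟩
    · exact h0.ge
    · exact hy ▸ (hS0 y.2).le
  have hdecomp : σ = σ {0} • Measure.dirac 0 +
      Measure.sum (fun k => ENNReal.ofReal (α k) • Measure.dirac (α k)) := by
    have hS' : Ioi 0 =ᵐ[σ] S := ae_eq_set.2 ⟨hnull, by rw [sdiff_eq_empty.2 hS0, measure_empty]⟩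
    conv_lhs => rw [σ.eq_dirac_add_restrict_Ioi hσ, Measure.restrict_congr_set hS',
      σ.restrict_eq_sum_smul_dirac hS]
    rw [hσα]
    congr 2 with y : 1
    rw [← ofReal_measureReal, hm y, ENNReal.ofReal_mul (Nat.cast_nonneg _),
      ENNReal.ofReal_natCast, mul_smul, Nat.cast_smul_eq_nsmul]
  have hsum : ∑' k, ENNReal.ofReal (α k) ≠ ∞ := by
    have := congrArg (fun μ : Measure ℝ => μ univ) hdecomp
    simp only [Measure.add_apply, Measure.smul_apply, Measure.sum_apply _ MeasurableSet.univ,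
      measure_univ, smul_eq_mul, mul_one] at this
    exact ne_top_of_le_ne_top (measure_ne_top σ univ) (this ▸ le_add_self)
  refine ⟨α, σ.real {0}, summable_of_tsum_ofReal_ne_top hα0 hsum, hα0, measureReal_nonneg, ?_⟩
  rwa [ofReal_measureReal]

theorem polya_parameter_set_weakly_closed_general
    (a : ℕ → ℕ → ℝ) (g : ℕ → ℝ)
    (ha : ∀ n, Summable (a n)) (han : ∀ n k, 0 ≤ a n k)
    (σ : Measure ℝ) [IsFiniteMeasure σ] (hσ : σ (Set.Iio 0) = 0)
    (hconv : ∀ f : ℝ → ℝ, Continuous f → (∃ C : ℝ, ∀ x, |f x| ≤ C) →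
      Tendsto (fun n => g n * f 0 + ∑' k, a n k * f (a n k)) atTop
        (nhds (∫ x, f x ∂σ))) :
    ∃ (α : ℕ → ℝ) (γ : ℝ), Summable α ∧ (∀ k, 0 ≤ α k) ∧ 0 ≤ γ ∧
      σ = ENNReal.ofReal γ • Measure.dirac (0 : ℝ) +
        Measure.sum (fun k : ℕ => ENNReal.ofReal (α k) • Measure.dirac (α k)) := by
  have h : IsPolyaWeakLimit a g σ := hconv
  set S : Set ℝ := {x | 0 < x ∧ σ {x} ≠ 0}
  have hS : S.Countable := (Measure.countable_meas_level_set_pos measurable_id).mono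
    fun x hx => pos_iff_ne_zero.2 hx.2
  have hnull : σ (Ioi 0 \ S) = 0 := measure_null_of_locally_null _ fun y hy => by
    obtain ⟨u, hu, hu0⟩ :=
      h.exists_nhds_measure_eq_zero ha han hy.1 (not_and_not_right.1 hy.2 hy.1)
    exact ⟨u, mem_nhdsWithin_of_mem_nhds hu, hu0⟩
  choose m hm using fun y : S => h.exists_measureReal_singleton_eq_nat_mul ha han y.2.1
  exact exists_polya_parameters_of_atoms σ hσ hS (fun x hx => hx.1) hnull m hm

/-- The family of measures `σ_ω = γδ₀ + Σ_j α_j δ_{α_j}` on `[0,∞)`,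
for `ω = (α,γ)` with `α` a summable sequence of nonnegative reals and `γ ≥ 0`, is weakly
closed among finite positive measures on `[0,∞)`: if
`γ⁽ⁿ⁾ f(0) + Σ_k α_k⁽ⁿ⁾ f(α_k⁽ⁿ⁾) → ∫ f dσ` for every bounded continuous `f`, then
`σ = γδ₀ + Σ_k α_k δ_{α_k}` for some parameter `(α,γ)`. -/
theorem polya_parameter_set_weakly_closed
    (a : ℕ → ℕ → ℝ) (g : ℕ → ℝ)
    (ha : ∀ n, Summable (a n)) (han : ∀ n k, 0 ≤ a n k) (hg : ∀ n, 0 ≤ g n)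
    (σ : Measure ℝ) [IsFiniteMeasure σ] (hσ : σ (Set.Iio 0) = 0)
    (hconv : ∀ f : ℝ → ℝ, Continuous f → (∃ C : ℝ, ∀ x, |f x| ≤ C) →
      Tendsto (fun n => g n * f 0 + ∑' k, a n k * f (a n k)) atTop
        (nhds (∫ x, f x ∂σ))) :
    ∃ (α : ℕ → ℝ) (γ : ℝ), Summable α ∧ (∀ k, 0 ≤ α k) ∧ 0 ≤ γ ∧
      σ = ENNReal.ofReal γ • Measure.dirac (0 : ℝ) +
        Measure.sum (fun k : ℕ => ENNReal.ofReal (α k) • Measure.dirac (α k)) :=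
  polya_parameter_set_weakly_closed_general a g ha han σ hσ hconv
end

section
/- Let Ω be the set of parameters ω = (α, γ) where α = (α_j)_{j≥1} is a summable sequence of nonnegative reals and γ ≥ 0; for ω ∈ Ω let σ_ω = γδ₀ + Σ_j α_j δ_{α_j} (a finite measure on [0,∞)) and let Π(ω,λ) = e^{−γλ²/4} ∏_{j=1}^∞ 1/(1 + α_j λ²/4) be the modified Pólya function. Let (ω⁽ⁿ⁾) be a sequence in Ω and ω ∈ Ω. Then the following are equivalent: (a) for every bounded continuous function f on [0,∞), ∫ f dσ_{ω⁽ⁿ⁾} → ∫ f dσ_ω as n → ∞; (b) Π(ω⁽ⁿ⁾, ·) converges to Π(ω, ·) uniformly on every compact subset of ℝ. -/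
/-!
Write `ψ_u(x) = log (1 + x u) / x` (with `ψ_u(0) = u`), `F_ω(u) = ∫ ψ_u dσ_ω` and
`T_m(u) = ∫ (1 + x u)⁻ᵐ dσ_ω`, so that `Π(ω, t) = exp (-F_ω (t² / 4))`.

(a) ⇒ (b): every `ψ_u` is bounded and continuous, so `F_{ω⁽ⁿ⁾} → F_ω` pointwise, and the masses
converge. Since `F_ω` is Lipschitz with constant the mass of `σ_ω`, the functions `Π(ω⁽ⁿ⁾, ·)` are
equicontinuous, and Ascoli turns pointwise convergence into uniform convergence on compacts.

(b) ⇒ (a): again `F_{ω⁽ⁿ⁾} → F_ω` pointwise. `F_ω` is concave with derivative `T_1`, and `-T_m` is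
concave with derivative `m ∫ x (1 + x u)⁻ᵐ⁻¹ dσ_ω = m (T_m - T_{m+1}) / u`. Derivatives of concave
functions converging pointwise converge wherever the limit derivative is continuous, so inductively
`T_m(u)` converges for all `m ≥ 1` and `u > 0`. The value `F_ω(1)` bounds the atoms by
`M = exp F_ω(1)` and bounds the mass, uniformly in `n`. This gives convergence of the mass `T_0`
(as `0 ≤ T_0 - T_1(u) ≤ u M T_0`) and confines all the measures to `[0, M]`, where polynomials in
`(1 + x)⁻¹` are uniformly dense.
-/

open Filter

/-- The modified Pólya function of parameter `ω = (α, γ)`: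
`Π(ω,λ) = e^{−γλ²/4} ∏_{j=1}^∞ 1/(1 + α_j λ²/4)`. -/
noncomputable def polyaFun (α : ℕ → ℝ) (γ : ℝ) (t : ℝ) : ℝ :=
  Real.exp (-(γ * t ^ 2) / 4) * ∏' j : ℕ, (1 + α j * t ^ 2 / 4)⁻¹

open Topology Set

theorem IsCompact.tendstoUniformlyOn_of_equicontinuousOn {ι X E : Type*} [TopologicalSpace X]
    [UniformSpace E] {F : ι → X → E} {f : X → E} {K : Set X} {p : Filter ι}
    (hK : IsCompact K) (hF : EquicontinuousOn F K)
    (h : ∀ x ∈ K, Tendsto (fun i => F i x) p (𝓝 (f x))) : TendstoUniformlyOn F f p K := by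
  have key := (EquicontinuousOn.tendsto_uniformOnFun_iff_pi' (𝔖 := {K}) (by simpa using hK)
    (by simpa using hF) p f).2 ?_
  · exact UniformOnFun.tendsto_iff_tendstoUniformlyOn.1 key K rfl
  · rw [tendsto_pi_nhds]
    rintro ⟨x, hx⟩
    exact h x (by simpa using hx)

theorem tendsto_of_forall_dist_le {ι E : Type*} [PseudoMetricSpace E] {p : Filter ι}
    {x : ι → E} {l : E}
    (h : ∀ ε > 0, ∃ (y : ι → E) (m : E), Tendsto y p (𝓝 m) ∧
      (∀ᶠ i in p, dist (x i) (y i) ≤ ε) ∧ dist l m ≤ ε) :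
    Tendsto x p (𝓝 l) := by
  refine Metric.tendsto_nhds.2 fun ε hε => ?_
  obtain ⟨y, m, hy, hxy, hlm⟩ := h (ε / 3) (by positivity)
  filter_upwards [hxy, Metric.tendsto_nhds.1 hy (ε / 3) (by positivity)] with i hi hi'
  calc dist (x i) l ≤ dist (x i) (y i) + dist (y i) m + dist l m := by
        linarith [dist_triangle (x i) (y i) l, dist_triangle (y i) m l, dist_comm l m]
    _ < ε := by linarith

lemma abs_exp_neg_sub_exp_neg_le {x y : ℝ} (hx : 0 ≤ x) (hy : 0 ≤ y) :
    |Real.exp (-x) - Real.exp (-y)| ≤ |x - y| := by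
  wlog hxy : x ≤ y generalizing x y
  · rw [abs_sub_comm, abs_sub_comm x]
    exact this hy hx (le_of_not_ge hxy)
  have h1 : Real.exp (-x) ≤ 1 := Real.exp_le_one_iff.2 (by linarith)
  have h2 : Real.exp (-y) = Real.exp (-x) * Real.exp (x - y) := by
    rw [← Real.exp_add]; ring_nf
  have h3 : x - y + 1 ≤ Real.exp (x - y) := Real.add_one_le_exp _
  have h4 : Real.exp (x - y) ≤ 1 := Real.exp_le_one_iff.2 (by linarith)
  have h5 := Real.exp_pos (-x)
  rw [abs_of_nonneg (by rw [h2]; nlinarith), abs_of_nonpos (by linarith), h2]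
  nlinarith

lemma mul_div_add_one_le {a ε : ℝ} (ha : 0 ≤ a) (hε : 0 ≤ ε) : a * (ε / (a + 1)) ≤ ε := by
  rw [mul_div_left_comm]
  exact mul_le_of_le_one_right hε (div_le_one_of_le₀ (by linarith) (by positivity))

/-- For differentiable `f` this says that `f` is concave on `s` with derivative `d`. -/
def SlopeBounds (f d : ℝ → ℝ) (s : Set ℝ) : Prop :=
  ∀ u ∈ s, ∀ v ∈ s, u ≤ v → (v - u) * d v ≤ f v - f u ∧ f v - f u ≤ (v - u) * d u

lemma SlopeBounds.mono {f d : ℝ → ℝ} {s t : Set ℝ} (h : SlopeBounds f d s) (hts : t ⊆ s) :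
    SlopeBounds f d t :=
  fun u hu v hv huv => h u (hts hu) v (hts hv) huv

lemma slopeBounds_of_hasDerivAt {f d : ℝ → ℝ} {s : Set ℝ} (hs : s.OrdConnected)
    (hf : ∀ u ∈ s, HasDerivAt f (d u) u) (hd : AntitoneOn d s) : SlopeBounds f d s := by
  intro u hu v hv huv
  rcases huv.eq_or_lt with rfl | huv
  · simp
  have hIcc : Icc u v ⊆ s := hs.out hu hv
  obtain ⟨c, hc, hdc⟩ := exists_hasDerivAt_eq_slope f d huv
    (fun w hw => (hf w (hIcc hw)).continuousAt.continuousWithinAt)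
    (fun w hw => hf w (hIcc (Ioo_subset_Icc_self hw)))
  have hcs : c ∈ s := hIcc (Ioo_subset_Icc_self hc)
  have hvu : 0 < v - u := sub_pos.2 huv
  rw [eq_div_iff hvu.ne'] at hdc
  constructor
  · nlinarith [hd hcs hv hc.2.le]
  · nlinarith [hd hu hcs hc.1.le]

lemma tendsto_of_slopeBounds {f d : ℕ → ℝ → ℝ} {F D : ℝ → ℝ} {s : Set ℝ} {x : ℝ}
    (hs : s ∈ 𝓝 x) (hf : ∀ n, SlopeBounds (f n) (d n) s) (hF : SlopeBounds F D s)
    (hD : ContinuousAt D x) (hlim : ∀ u ∈ s, Tendsto (fun n => f n u) atTop (𝓝 (F u))) :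
    Tendsto (fun n => d n x) atTop (𝓝 (D x)) := by
  have hx : x ∈ s := mem_of_mem_nhds hs
  refine tendsto_order.2 ⟨fun b hb => ?_, fun b hb => ?_⟩
  · obtain ⟨c, hbc, hcD⟩ := exists_between hb
    obtain ⟨y, ⟨hcy, hys⟩, hxy⟩ := (((hD.eventually (lt_mem_nhds hcD)).and hs).filter_mono
      nhdsWithin_le_nhds |>.and (self_mem_nhdsWithin (s := Ioi x))).exists
    have hyx : 0 < y - x := sub_pos.2 hxy
    have hlt : (y - x) * c < F y - F x := by nlinarith [(hF x hx y hys hxy.le).1]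
    filter_upwards [((hlim y hys).sub (hlim x hx)).eventually (lt_mem_nhds hlt)] with n hn
    nlinarith [(hf n x hx y hys hxy.le).2]
  · obtain ⟨c, hDc, hcb⟩ := exists_between hb
    obtain ⟨y, ⟨hyc, hys⟩, hyx⟩ := (((hD.eventually (gt_mem_nhds hDc)).and hs).filter_mono
      nhdsWithin_le_nhds |>.and (self_mem_nhdsWithin (s := Iio x))).exists
    have hxy : 0 < x - y := sub_pos.2 hyx
    have hlt : F x - F y < (x - y) * c := by nlinarith [(hF y hys x hx hyx.le).2]
    filter_upwards [((hlim x hx).sub (hlim y hys)).eventually (gt_mem_nhds hlt)] with n hn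
    nlinarith [(hf n y hys x hx hyx.le).1]

section Kernels

/-- `ψ_u(x) = log (1 + x u) / x`, continued by its limit `u` at `x = 0`; the constant value on
`x < 0` only serves to make it a bounded continuous function on `ℝ`. -/
noncomputable def logKernel (u x : ℝ) : ℝ := if x ≤ 0 then u else Real.log (1 + x * u) / x

noncomputable def powKernel (m : ℕ) (u x : ℝ) : ℝ := ((1 + x * u) ^ m)⁻¹

variable {m : ℕ} {u v x : ℝ}

lemma one_add_mul_pos (hx : 0 ≤ x) (hu : 0 ≤ u) : 0 < 1 + x * u := by positivity

lemma hasDerivAt_one_add_mul (x u : ℝ) : HasDerivAt (fun u => 1 + x * u) x u := by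
  simpa using ((hasDerivAt_id' u).const_mul x).const_add 1

lemma logKernel_zero_left : logKernel 0 x = 0 := by simp [logKernel]

lemma mul_logKernel (hx : 0 ≤ x) : x * logKernel u x = Real.log (1 + x * u) := by
  rcases hx.eq_or_lt with rfl | hx
  · simp
  · rw [logKernel, if_neg hx.not_ge, mul_div_cancel₀ _ hx.ne']

lemma powKernel_zero : powKernel 0 u = fun _ => 1 := by
  funext x
  simp [powKernel]

lemma powKernel_zero_left : powKernel m 0 x = 1 := by simp [powKernel]

lemma powKernel_nonneg (hx : 0 ≤ x) (hu : 0 ≤ u) : 0 ≤ powKernel m u x := by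
  unfold powKernel; positivity

lemma powKernel_le_one (hx : 0 ≤ x) (hu : 0 ≤ u) : powKernel m u x ≤ 1 :=
  inv_le_one_of_one_le₀ (one_le_pow₀ (le_add_of_nonneg_right (mul_nonneg hx hu)))

lemma antitoneOn_powKernel (hx : 0 ≤ x) : AntitoneOn (fun u => powKernel m u x) (Ici 0) :=
  fun u hu v _ huv => inv_anti₀ (pow_pos (one_add_mul_pos hx hu) m)
    (pow_le_pow_left₀ (one_add_mul_pos hx hu).le (by gcongr) m)

lemma powKernel_succ (hx : 0 ≤ x) (hu : 0 ≤ u) :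
    powKernel (m + 1) u x = powKernel m u x - u * (x * powKernel (m + 1) u x) := by
  have := one_add_mul_pos hx hu
  simp only [powKernel]
  field_simp
  ring

lemma hasDerivAt_logKernel (hx : 0 ≤ x) (hu : 0 ≤ u) :
    HasDerivAt (fun u => logKernel u x) (powKernel 1 u x) u := by
  rcases hx.eq_or_lt with rfl | hx
  · simpa [logKernel, powKernel] using hasDerivAt_id' u
  · simp only [logKernel, if_neg hx.not_ge]
    refine (((hasDerivAt_one_add_mul x u).log
      (one_add_mul_pos hx.le hu).ne').div_const x).congr_deriv ?_
    simp only [powKernel, pow_one]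
    field_simp

lemma hasDerivAt_neg_powKernel (hx : 0 ≤ x) (hu : 0 ≤ u) :
    HasDerivAt (fun u => -powKernel m u x) (m * (x * powKernel (m + 1) u x)) u := by
  have hpos := one_add_mul_pos hx hu
  refine (((hasDerivAt_one_add_mul x u).pow m).inv (pow_pos hpos m).ne').neg.congr_deriv ?_
  simp only [powKernel, Pi.pow_apply]
  rcases m with _ | m
  · simp
  · rw [Nat.add_sub_cancel]
    field_simp
    ring

lemma continuousOn_powKernel (hx : 0 ≤ x) : ContinuousOn (fun u => powKernel m u x) (Ici 0) :=
  fun u hu => by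
    simpa [Pi.neg_def] using
      (hasDerivAt_neg_powKernel (m := m) hx hu).continuousAt.neg.continuousWithinAt (s := Ici 0)

lemma logKernel_slopeBounds (hx : 0 ≤ x) :
    SlopeBounds (fun u => logKernel u x) (fun u => powKernel 1 u x) (Ici 0) :=
  slopeBounds_of_hasDerivAt ordConnected_Ici (fun _ hu => hasDerivAt_logKernel hx hu)
    (antitoneOn_powKernel hx)

lemma neg_powKernel_slopeBounds (hx : 0 ≤ x) :
    SlopeBounds (fun u => -powKernel m u x) (fun u => m * (x * powKernel (m + 1) u x)) (Ici 0) :=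
  slopeBounds_of_hasDerivAt ordConnected_Ici (fun _ hu => hasDerivAt_neg_powKernel hx hu)
    fun u hu v hv huv => by
      have := antitoneOn_powKernel (m := m + 1) hx hu hv huv
      dsimp only at this ⊢
      gcongr

lemma logKernel_nonneg (hx : 0 ≤ x) (hu : 0 ≤ u) : 0 ≤ logKernel u x := by
  have := (logKernel_slopeBounds hx 0 self_mem_Ici u hu hu).1
  simp only [logKernel_zero_left, sub_zero] at this
  exact (mul_nonneg hu (powKernel_nonneg hx hu)).trans this

lemma abs_logKernel_sub_le (hx : 0 ≤ x) (hu : 0 ≤ u) (hv : 0 ≤ v) :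
    |logKernel u x - logKernel v x| ≤ |u - v| := by
  wlog huv : u ≤ v generalizing u v
  · rw [abs_sub_comm, abs_sub_comm u]
    exact this hv hu (le_of_not_ge huv)
  obtain ⟨hlo, hhi⟩ := logKernel_slopeBounds hx u hu v hv huv
  have h0 : 0 ≤ (v - u) * powKernel 1 v x :=
    mul_nonneg (sub_nonneg.2 huv) (powKernel_nonneg hx hv)
  have h1 : (v - u) * powKernel 1 u x ≤ v - u :=
    mul_le_of_le_one_right (sub_nonneg.2 huv) (powKernel_le_one hx hu)
  rw [abs_sub_comm, abs_sub_comm u, abs_of_nonneg (by linarith), abs_of_nonneg (by linarith)]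
  linarith

lemma abs_logKernel_le (hu : 0 ≤ u) (x : ℝ) : |logKernel u x| ≤ u := by
  rcases le_or_gt x 0 with hx | hx
  · simp [logKernel, hx, abs_of_nonneg hu]
  · simpa [logKernel_zero_left, abs_of_nonneg hu] using abs_logKernel_sub_le hx.le hu le_rfl

lemma continuous_logKernel (hu : 0 ≤ u) : Continuous (logKernel u) := by
  set f : ℝ → ℝ := fun y => Real.log (1 + y * u)
  have hf : ∀ x, 0 ≤ x → HasDerivAt f (u / (1 + x * u)) x := fun x hx => by
    simpa [f, mul_comm] using ((hasDerivAt_one_add_mul u x).log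
      (by nlinarith : (1 : ℝ) + u * x ≠ 0))
  have hslope : ContinuousOn (dslope f 0) (Ici 0) := fun x hx => by
    rcases (mem_Ici.1 hx).eq_or_lt with rfl | hx
    · exact (continuousAt_dslope_same.2 (hf 0 le_rfl).differentiableAt).continuousWithinAt
    · exact ((continuousAt_dslope_of_ne hx.ne').2 (hf x hx.le).continuousAt).continuousWithinAt
  have heq : logKernel u = fun x => if x ≤ 0 then u else dslope f 0 x := by
    funext x
    by_cases hx : x ≤ 0
    · simp [logKernel, hx]
    · simp [logKernel, hx, dslope_of_ne f (ne_of_gt (not_le.1 hx)), slope_def_field, f]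
  rw [heq]
  exact continuous_if_le continuous_id continuous_const continuousOn_const
    (hslope.mono fun x hx => hx) fun x hx => by simp [hx, dslope_same, (hf 0 le_rfl).deriv]

lemma one_le_mul_logKernel_one {M : ℝ} (hx : 0 ≤ x) (hxM : x ≤ M) :
    1 ≤ (1 + M) * logKernel 1 x := by
  have := (logKernel_slopeBounds hx 0 self_mem_Ici 1 (mem_Ici.2 zero_le_one) zero_le_one).1
  simp only [logKernel_zero_left, sub_zero, one_mul, powKernel, pow_one] at this
  calc 1 = (1 + M) * (1 + M)⁻¹ := (mul_inv_cancel₀ (by linarith)).symm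
    _ ≤ (1 + M) * (1 + x * 1)⁻¹ := by gcongr <;> linarith
    _ ≤ (1 + M) * logKernel 1 x := by gcongr; linarith

lemma abs_one_sub_powKernel_one_le (hx : 0 ≤ x) (hu : 0 ≤ u) :
    |1 - powKernel 1 u x| ≤ u * x := by
  obtain ⟨hlo, hhi⟩ := neg_powKernel_slopeBounds (m := 1) hx 0 self_mem_Ici u hu hu
  simp only [powKernel_zero_left, sub_zero, Nat.cast_one, one_mul, mul_one] at hlo hhi
  rw [abs_le]
  constructor <;> nlinarith [mul_nonneg hu (mul_nonneg hx (powKernel_nonneg (m := 1 + 1) hx hu))]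

lemma exists_sum_powKernel_near {f : ℝ → ℝ} (hf : Continuous f) {M ε : ℝ} (hM : 0 ≤ M)
    (hε : 0 < ε) : ∃ (d : ℕ) (c : ℕ → ℝ),
      ∀ x ∈ Icc 0 M, |f x - ∑ i ∈ Finset.range d, c i * powKernel i 1 x| ≤ ε := by
  have hcont : ContinuousOn (fun y => f (y⁻¹ - 1)) (Icc (1 + M)⁻¹ 1) :=
    hf.comp_continuousOn ((continuousOn_inv₀.mono fun y hy =>
      (lt_of_lt_of_le (by positivity) hy.1).ne').sub continuousOn_const)
  obtain ⟨p, hp⟩ := exists_polynomial_near_of_continuousOn _ _ _ hcont ε hε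
  refine ⟨p.natDegree + 1, p.coeff, fun x hx => ?_⟩
  have hx1 : 0 < 1 + x := by linarith [hx.1]
  have hy : (1 + x)⁻¹ ∈ Icc (1 + M)⁻¹ 1 :=
    ⟨inv_anti₀ hx1 (by linarith [hx.2]), inv_le_one_of_one_le₀ (by linarith [hx.1])⟩
  have := hp _ hy
  rw [inv_inv, add_sub_cancel_left, Polynomial.eval_eq_sum_range, abs_sub_comm] at this
  simpa [powKernel, inv_pow] using this.le

end Kernels

/-- A point `ω = (α, γ)` of `Ω`; `ω.integral f` below is `∫ f dσ_ω`. -/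
structure PolyaParam where
  α : ℕ → ℝ
  γ : ℝ
  summable : Summable α
  nonneg : ∀ k, 0 ≤ α k
  γ_nonneg : 0 ≤ γ

namespace PolyaParam

variable (ω : PolyaParam)

noncomputable def integral (f : ℝ → ℝ) : ℝ := ω.γ * f 0 + ∑' k, ω.α k * f (ω.α k)

noncomputable def mass : ℝ := ω.γ + ∑' k, ω.α k

def AtomSummable (f : ℝ → ℝ) : Prop := Summable fun k => ω.α k * f (ω.α k)

def BoundedBy (M B : ℝ) : Prop := (∀ k, ω.α k ≤ M) ∧ ω.mass ≤ B

variable {ω} {f g : ℝ → ℝ}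

lemma mass_nonneg : 0 ≤ ω.mass := add_nonneg ω.γ_nonneg (tsum_nonneg ω.nonneg)

lemma BoundedBy.nonneg {M B : ℝ} (h : ω.BoundedBy M B) : 0 ≤ M ∧ 0 ≤ B :=
  ⟨(ω.nonneg 0).trans (h.1 0), ω.mass_nonneg.trans h.2⟩

lemma atom_le_tsum (k : ℕ) : ω.α k ≤ ∑' j, ω.α j :=
  ω.summable.le_tsum k fun j _ => ω.nonneg j

lemma atomSummable_of_abs_le {C : ℝ} (hf : ∀ k, |f (ω.α k)| ≤ C) : ω.AtomSummable f :=
  Summable.of_norm_bounded (ω.summable.mul_left C) fun k => by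
    rw [Real.norm_eq_abs, abs_mul, abs_of_nonneg (ω.nonneg k), mul_comm (ω.α k)]
    exact mul_le_mul_of_nonneg_right (hf k) (ω.nonneg k)

lemma AtomSummable.sub (hf : ω.AtomSummable f) (hg : ω.AtomSummable g) :
    ω.AtomSummable (fun x => f x - g x) := by
  simpa only [AtomSummable, mul_sub] using Summable.sub hf hg

lemma AtomSummable.const_mul (hf : ω.AtomSummable f) (c : ℝ) :
    ω.AtomSummable (fun x => c * f x) := by
  simpa only [AtomSummable, mul_left_comm _ c] using hf.mul_left c

lemma atomSummable_finset_sum {ι : Type*} (s : Finset ι) (f : ι → ℝ → ℝ)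
    (hf : ∀ i ∈ s, ω.AtomSummable (f i)) : ω.AtomSummable (fun x => ∑ i ∈ s, f i x) := by
  simpa only [AtomSummable, Finset.mul_sum] using summable_sum hf

lemma integral_congr (h0 : f 0 = g 0) (hk : ∀ k, f (ω.α k) = g (ω.α k)) :
    ω.integral f = ω.integral g := by
  simp only [integral, h0, hk]

lemma integral_sub (hf : ω.AtomSummable f) (hg : ω.AtomSummable g) :
    ω.integral (fun x => f x - g x) = ω.integral f - ω.integral g := by
  simp only [integral, mul_sub, hf.tsum_sub hg]
  ring

lemma integral_neg : ω.integral (fun x => -f x) = -ω.integral f := by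
  simp only [integral, mul_neg, tsum_neg]
  ring

lemma integral_const_mul (c : ℝ) : ω.integral (fun x => c * f x) = c * ω.integral f := by
  simp only [integral, mul_left_comm _ c, tsum_mul_left]
  ring

lemma integral_const (c : ℝ) : ω.integral (fun _ => c) = ω.mass * c := by
  simp only [integral, mass, tsum_mul_right]
  ring

lemma integral_finset_sum {ι : Type*} (s : Finset ι) (f : ι → ℝ → ℝ)
    (hf : ∀ i ∈ s, ω.AtomSummable (f i)) :
    ω.integral (fun x => ∑ i ∈ s, f i x) = ∑ i ∈ s, ω.integral (f i) := by
  simp only [integral, Finset.mul_sum, Finset.sum_add_distrib]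
  rw [Summable.tsum_finsetSum hf]

lemma integral_nonneg (h0 : 0 ≤ f 0) (hk : ∀ k, 0 ≤ f (ω.α k)) :
    0 ≤ ω.integral f :=
  add_nonneg (mul_nonneg ω.γ_nonneg h0)
    (tsum_nonneg fun k => mul_nonneg (ω.nonneg k) (hk k))

lemma integral_mono (hf : ω.AtomSummable f) (hg : ω.AtomSummable g) (h0 : f 0 ≤ g 0)
    (hk : ∀ k, f (ω.α k) ≤ g (ω.α k)) : ω.integral f ≤ ω.integral g := by
  rw [← sub_nonneg, ← integral_sub hg hf]
  exact integral_nonneg (sub_nonneg.2 h0) fun k => sub_nonneg.2 (hk k)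

lemma abs_integral_sub_le (hf : ω.AtomSummable f) (hg : ω.AtomSummable g) {ε : ℝ}
    (h0 : |f 0 - g 0| ≤ ε) (hk : ∀ k, |f (ω.α k) - g (ω.α k)| ≤ ε) :
    |ω.integral f - ω.integral g| ≤ ω.mass * ε := by
  rw [← integral_sub hf hg, abs_le]
  have hfg := hf.sub hg
  have hlower := integral_mono (f := fun _ => -ε)
    (atomSummable_of_abs_le fun _ => le_refl |-ε|) hfg
    (neg_le_of_abs_le h0) fun k => neg_le_of_abs_le (hk k)
  have hupper := integral_mono (g := fun _ => ε) hfg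
    (atomSummable_of_abs_le fun _ => le_refl |ε|) (le_of_abs_le h0) fun k => le_of_abs_le (hk k)
  rw [integral_const] at hlower hupper
  constructor <;> linarith

lemma atomSummable_of_continuous {M : ℝ} (hf : Continuous f) (hM : ∀ k, ω.α k ≤ M) :
    ω.AtomSummable f := by
  obtain ⟨C, hC⟩ :=
    (isCompact_Icc (a := 0) (b := M)).exists_bound_of_continuousOn hf.continuousOn
  exact atomSummable_of_abs_le fun k => hC _ ⟨ω.nonneg k, hM k⟩

lemma atomSummable_logKernel {u : ℝ} (hu : 0 ≤ u) : ω.AtomSummable (logKernel u) :=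
  atomSummable_of_abs_le fun _ => abs_logKernel_le hu _

lemma atomSummable_powKernel {m : ℕ} {u : ℝ} (hu : 0 ≤ u) : ω.AtomSummable (powKernel m u) :=
  atomSummable_of_abs_le fun k => by
    rw [abs_of_nonneg (powKernel_nonneg (ω.nonneg k) hu)]
    exact powKernel_le_one (ω.nonneg k) hu

lemma abs_mul_powKernel_le {m : ℕ} {u : ℝ} (hu : 0 ≤ u) (k : ℕ) :
    |ω.α k * powKernel m u (ω.α k)| ≤ ∑' j, ω.α j := by
  rw [abs_of_nonneg (mul_nonneg (ω.nonneg k) (powKernel_nonneg (ω.nonneg k) hu))]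
  exact (mul_le_of_le_one_right (ω.nonneg k) (powKernel_le_one (ω.nonneg k) hu)).trans
    (ω.atom_le_tsum k)

lemma atomSummable_mul_powKernel {m : ℕ} {u : ℝ} (hu : 0 ≤ u) :
    ω.AtomSummable (fun x => x * powKernel m u x) :=
  atomSummable_of_abs_le (abs_mul_powKernel_le hu)

lemma slopeBounds_integral {φ δ : ℝ → ℝ → ℝ} {s : Set ℝ}
    (h : ∀ x, 0 ≤ x → SlopeBounds (fun u => φ u x) (fun u => δ u x) s)
    (hφ : ∀ u ∈ s, ω.AtomSummable (φ u)) (hδ : ∀ u ∈ s, ω.AtomSummable (δ u)) :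
    SlopeBounds (fun u => ω.integral (φ u)) (fun u => ω.integral (δ u)) s := by
  intro u hu v hv huv
  have hx : ∀ x : ℝ, 0 ≤ x → _ := fun x hx => h x hx u hu v hv huv
  have hdiff := (hφ v hv).sub (hφ u hu)
  simp only [← integral_const_mul, ← integral_sub (hφ v hv) (hφ u hu)]
  exact ⟨integral_mono ((hδ v hv).const_mul _) hdiff (hx 0 le_rfl).1
      fun k => (hx _ (ω.nonneg k)).1,
    integral_mono hdiff ((hδ u hu).const_mul _) (hx 0 le_rfl).2 fun k => (hx _ (ω.nonneg k)).2⟩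

lemma continuousOn_integral {φ : ℝ → ℝ → ℝ} {s : Set ℝ} {C : ℝ}
    (hφ : ∀ x, 0 ≤ x → ContinuousOn (fun u => φ u x) s)
    (hb : ∀ u ∈ s, ∀ k, |ω.α k * φ u (ω.α k)| ≤ C * ω.α k) :
    ContinuousOn (fun u => ω.integral (φ u)) s :=
  ((hφ 0 le_rfl).const_smul ω.γ).add <| continuousOn_tsum
    (fun k => (hφ _ (ω.nonneg k)).const_smul (ω.α k)) (ω.summable.mul_left C)
    fun k u hu => hb u hu k

lemma slopeBounds_integral_logKernel :
    SlopeBounds (fun u => ω.integral (logKernel u)) (fun u => ω.integral (powKernel 1 u))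
      (Ici 0) :=
  slopeBounds_integral (fun _ hx => logKernel_slopeBounds hx)
    (fun _ hu => atomSummable_logKernel hu) fun _ hu => atomSummable_powKernel hu

lemma slopeBounds_integral_neg_powKernel (m : ℕ) :
    SlopeBounds (fun u => ω.integral (fun x => -powKernel m u x))
      (fun u => ω.integral (fun x => m * (x * powKernel (m + 1) u x))) (Ici 0) :=
  slopeBounds_integral (fun _ hx => neg_powKernel_slopeBounds hx)
    (fun _ hu => by simpa using (atomSummable_powKernel (ω := ω) (m := m) hu).const_mul (-1))
    fun _ hu => (atomSummable_mul_powKernel hu).const_mul _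

lemma continuousOn_integral_powKernel (m : ℕ) :
    ContinuousOn (fun u => ω.integral (powKernel m u)) (Ici 0) :=
  continuousOn_integral (C := 1) (fun _ hx => continuousOn_powKernel hx) fun u hu k => by
    rw [one_mul, abs_mul, abs_of_nonneg (ω.nonneg k)]
    exact mul_le_of_le_one_right (ω.nonneg k)
      ((abs_of_nonneg (powKernel_nonneg (ω.nonneg k) hu)).trans_le
        (powKernel_le_one (ω.nonneg k) hu))

lemma continuousOn_integral_mul_powKernel (m : ℕ) :
    ContinuousOn (fun u => ω.integral (fun x => m * (x * powKernel (m + 1) u x))) (Ici 0) :=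
  continuousOn_integral (C := m * ∑' j, ω.α j)
    (fun _ _ => continuousOn_const.mul (continuousOn_const.mul (continuousOn_powKernel ‹_›)))
    fun u hu k => by
      rw [mul_left_comm, abs_mul, abs_of_nonneg (Nat.cast_nonneg m), mul_assoc]
      exact mul_le_mul_of_nonneg_left (by
        rw [abs_mul, abs_of_nonneg (ω.nonneg k), mul_comm]
        exact mul_le_mul_of_nonneg_right (abs_mul_powKernel_le hu k) (ω.nonneg k))
        (Nat.cast_nonneg m)

lemma integral_powKernel_succ {m : ℕ} {u : ℝ} (hu : 0 ≤ u) :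
    ω.integral (powKernel (m + 1) u) =
      ω.integral (powKernel m u) - u * ω.integral (fun x => x * powKernel (m + 1) u x) := by
  rw [← integral_const_mul, ← integral_sub (atomSummable_powKernel hu)
    ((atomSummable_mul_powKernel hu).const_mul u)]
  exact integral_congr (powKernel_succ le_rfl hu) fun k => powKernel_succ (ω.nonneg k) hu

lemma integral_logKernel_nonneg {u : ℝ} (hu : 0 ≤ u) : 0 ≤ ω.integral (logKernel u) :=
  integral_nonneg (logKernel_nonneg le_rfl hu) fun k => logKernel_nonneg (ω.nonneg k) hu

lemma abs_integral_logKernel_sub_le {u v : ℝ} (hu : 0 ≤ u) (hv : 0 ≤ v) :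
    |ω.integral (logKernel u) - ω.integral (logKernel v)| ≤ ω.mass * |u - v| :=
  abs_integral_sub_le (atomSummable_logKernel hu) (atomSummable_logKernel hv)
    (abs_logKernel_sub_le le_rfl hu hv) fun k => abs_logKernel_sub_le (ω.nonneg k) hu hv

lemma boundedBy_of_integral_logKernel_one_le {c : ℝ} (hc : ω.integral (logKernel 1) ≤ c) :
    ω.BoundedBy (Real.exp c) ((1 + Real.exp c) * c) := by
  have hatom : ∀ k, ω.α k ≤ Real.exp c := fun k => by
    have hterm : ω.α k * logKernel 1 (ω.α k) ≤ ∑' j, ω.α j * logKernel 1 (ω.α j) :=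
      (atomSummable_logKernel zero_le_one).le_tsum k fun j _ =>
        mul_nonneg (ω.nonneg j) (logKernel_nonneg (ω.nonneg j) zero_le_one)
    have h0 : 0 ≤ ω.γ * logKernel 1 0 :=
      mul_nonneg ω.γ_nonneg (logKernel_nonneg le_rfl zero_le_one)
    rw [mul_logKernel (ω.nonneg k), mul_one] at hterm
    have hlog : Real.log (1 + ω.α k) ≤ c := by rw [integral] at hc; linarith
    rw [Real.log_le_iff_le_exp (by linarith [ω.nonneg k])] at hlog
    linarith
  refine ⟨hatom, ?_⟩
  have hmono := integral_mono (ω := ω) (f := fun _ => 1)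
    (g := fun x => (1 + Real.exp c) * logKernel 1 x) (atomSummable_of_abs_le fun _ => le_refl |1|)
    ((atomSummable_logKernel zero_le_one).const_mul _)
    (one_le_mul_logKernel_one le_rfl (Real.exp_pos c).le)
    fun k => one_le_mul_logKernel_one (ω.nonneg k) (hatom k)
  rw [integral_const, mul_one, integral_const_mul] at hmono
  exact hmono.trans (by gcongr)

lemma abs_mass_sub_integral_powKernel_one_le {M B u : ℝ} (h : ω.BoundedBy M B) (hu : 0 ≤ u) :
    |ω.mass - ω.integral (powKernel 1 u)| ≤ B * (u * M) := by
  have huM : 0 ≤ u * M := mul_nonneg hu h.nonneg.1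
  rw [← mul_one ω.mass, ← integral_const]
  refine (abs_integral_sub_le (atomSummable_of_abs_le fun _ => le_refl |1|)
    (atomSummable_powKernel hu) ?_ fun k => ?_).trans (by gcongr; exact h.2)
  · simpa [powKernel] using huM
  · exact (abs_one_sub_powKernel_one_le (ω.nonneg k) hu).trans (by gcongr; exact h.1 k)

lemma polyaFun_eq_exp (t : ℝ) :
    polyaFun ω.α ω.γ t = Real.exp (-ω.integral (logKernel (t ^ 2 / 4))) := by
  have hu : 0 ≤ t ^ 2 / 4 := by positivity
  have hprod := ((ω.atomSummable_logKernel hu).hasSum.neg).rexp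
  have hterm : (Real.exp ∘ fun k => -(ω.α k * logKernel (t ^ 2 / 4) (ω.α k)))
      = fun k => (1 + ω.α k * t ^ 2 / 4)⁻¹ := by
    funext k
    rw [Function.comp_apply, mul_logKernel (ω.nonneg k), Real.exp_neg,
      Real.exp_log (one_add_mul_pos (ω.nonneg k) hu), mul_div_assoc]
  rw [hterm] at hprod
  rw [polyaFun, hprod.tprod_eq, ← Real.exp_add, integral, logKernel, if_pos le_rfl]
  ring_nf

lemma polyaFun_pos (t : ℝ) : 0 < polyaFun ω.α ω.γ t := by
  rw [polyaFun_eq_exp]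
  exact Real.exp_pos _

lemma abs_polyaFun_sub_le (s t : ℝ) :
    |polyaFun ω.α ω.γ s - polyaFun ω.α ω.γ t| ≤ ω.mass * |s ^ 2 / 4 - t ^ 2 / 4| := by
  have hs : 0 ≤ s ^ 2 / 4 := by positivity
  have ht : 0 ≤ t ^ 2 / 4 := by positivity
  rw [polyaFun_eq_exp, polyaFun_eq_exp]
  exact (abs_exp_neg_sub_exp_neg_le (integral_logKernel_nonneg hs)
    (integral_logKernel_nonneg ht)).trans (abs_integral_logKernel_sub_le hs ht)

lemma integral_logKernel_eq_neg_log_polyaFun {u : ℝ} (hu : 0 ≤ u) :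
    ω.integral (logKernel u) = -Real.log (polyaFun ω.α ω.γ (2 * √u)) := by
  rw [polyaFun_eq_exp, Real.log_exp, neg_neg, mul_pow, Real.sq_sqrt hu]
  ring_nf

end PolyaParam

open PolyaParam

section Convergence

variable {ω : ℕ → PolyaParam} {ω₀ : PolyaParam}

lemma tendsto_integral_powKernel_one
    (hF : ∀ u, 0 ≤ u → Tendsto (fun n => (ω n).integral (logKernel u)) atTop
      (𝓝 (ω₀.integral (logKernel u)))) {u : ℝ} (hu : 0 < u) :
    Tendsto (fun n => (ω n).integral (powKernel 1 u)) atTop (𝓝 (ω₀.integral (powKernel 1 u))) :=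
  tendsto_of_slopeBounds (Ioi_mem_nhds hu)
    (fun _ => slopeBounds_integral_logKernel.mono Ioi_subset_Ici_self)
    (slopeBounds_integral_logKernel.mono Ioi_subset_Ici_self)
    ((continuousOn_integral_powKernel 1).continuousAt (Ici_mem_nhds hu))
    fun v hv => hF v (le_of_lt hv)

lemma tendsto_integral_powKernel_add_two {m : ℕ}
    (hT : ∀ u, 0 < u → Tendsto (fun n => (ω n).integral (powKernel (m + 1) u)) atTop
      (𝓝 (ω₀.integral (powKernel (m + 1) u)))) {u : ℝ} (hu : 0 < u) :
    Tendsto (fun n => (ω n).integral (powKernel (m + 2) u)) atTop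
      (𝓝 (ω₀.integral (powKernel (m + 2) u))) := by
  have hU := tendsto_of_slopeBounds (Ioi_mem_nhds hu)
    (fun _ => (slopeBounds_integral_neg_powKernel (m + 1)).mono Ioi_subset_Ici_self)
    ((slopeBounds_integral_neg_powKernel (m + 1)).mono Ioi_subset_Ici_self)
    ((continuousOn_integral_mul_powKernel (m + 1)).continuousAt (Ici_mem_nhds hu))
    fun v hv => by simpa only [integral_neg] using (hT v hv).neg
  simp only [integral_const_mul] at hU
  have hm : ((m + 1 : ℕ) : ℝ) ≠ 0 := by positivity
  have hU' := hU.const_mul ((m + 1 : ℕ) : ℝ)⁻¹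
  simp only [inv_mul_cancel_left₀ hm] at hU'
  simp only [integral_powKernel_succ (m := m + 1) hu.le]
  exact (hT u hu).sub (hU'.const_mul u)

lemma tendsto_integral_powKernel_succ
    (hF : ∀ u, 0 ≤ u → Tendsto (fun n => (ω n).integral (logKernel u)) atTop
      (𝓝 (ω₀.integral (logKernel u)))) (m : ℕ) {u : ℝ} (hu : 0 < u) :
    Tendsto (fun n => (ω n).integral (powKernel (m + 1) u)) atTop
      (𝓝 (ω₀.integral (powKernel (m + 1) u))) := by
  induction m generalizing u with
  | zero => exact tendsto_integral_powKernel_one hF hu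
  | succ m ih => exact tendsto_integral_powKernel_add_two (fun _ hv => ih hv) hu

lemma tendsto_mass {M B : ℝ} (h₀ : ω₀.BoundedBy M B) (h : ∀ᶠ n in atTop, (ω n).BoundedBy M B)
    (hT : ∀ u, 0 < u → Tendsto (fun n => (ω n).integral (powKernel 1 u)) atTop
      (𝓝 (ω₀.integral (powKernel 1 u)))) :
    Tendsto (fun n => (ω n).mass) atTop (𝓝 ω₀.mass) := by
  obtain ⟨hM, hB⟩ := h₀.nonneg
  refine tendsto_of_forall_dist_le fun ε hε => ?_
  set u := ε / (B * M + 1)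
  have hu : 0 < u := by positivity
  have hBuM : B * (u * M) ≤ ε := by
    simpa only [u, mul_comm u, ← mul_assoc] using mul_div_add_one_le (mul_nonneg hB hM) hε.le
  refine ⟨_, _, hT u hu, ?_, ?_⟩
  · filter_upwards [h] with n hn
    exact (abs_mass_sub_integral_powKernel_one_le hn hu.le).trans hBuM
  · exact (abs_mass_sub_integral_powKernel_one_le h₀ hu.le).trans hBuM

lemma tendsto_integral_of_tendsto_powKernel {M B : ℝ} (h₀ : ω₀.BoundedBy M B)
    (h : ∀ᶠ n in atTop, (ω n).BoundedBy M B)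
    (hT : ∀ m, Tendsto (fun n => (ω n).integral (powKernel m 1)) atTop
      (𝓝 (ω₀.integral (powKernel m 1))))
    {f : ℝ → ℝ} (hf : Continuous f) :
    Tendsto (fun n => (ω n).integral f) atTop (𝓝 (ω₀.integral f)) := by
  obtain ⟨hM, hB⟩ := h₀.nonneg
  refine tendsto_of_forall_dist_le fun ε hε => ?_
  obtain ⟨d, c, hc⟩ := exists_sum_powKernel_near hf hM (show 0 < ε / (B + 1) by positivity)
  set q : ℝ → ℝ := fun x => ∑ i ∈ Finset.range d, c i * powKernel i 1 x
  have hsummable : ∀ ν : PolyaParam, ∀ i ∈ Finset.range d,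
      ν.AtomSummable (fun x => c i * powKernel i 1 x) :=
    fun ν i _ => (atomSummable_powKernel zero_le_one).const_mul _
  have hq : ∀ ν : PolyaParam,
      ν.integral q = ∑ i ∈ Finset.range d, c i * ν.integral (powKernel i 1) := fun ν => by
    simp only [q, integral_finset_sum _ _ (hsummable ν), integral_const_mul]
  have herr : ∀ ν : PolyaParam, ν.BoundedBy M B → dist (ν.integral f) (ν.integral q) ≤ ε :=
    fun ν hν => (abs_integral_sub_le (atomSummable_of_continuous hf hν.1)
      (atomSummable_finset_sum _ _ (hsummable ν)) (hc 0 ⟨le_rfl, hM⟩)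
      fun k => hc _ ⟨ν.nonneg k, hν.1 k⟩).trans
      ((mul_le_mul_of_nonneg_right hν.2 (by positivity)).trans (mul_div_add_one_le hB hε.le))
  refine ⟨_, _, ?_, h.mono fun n hn => herr _ hn, herr _ h₀⟩
  simp only [hq]
  exact tendsto_finsetSum _ fun i _ => (hT i).const_mul _

lemma tendsto_integral_of_tendsto_integral_logKernel
    (hF : ∀ u, 0 ≤ u → Tendsto (fun n => (ω n).integral (logKernel u)) atTop
      (𝓝 (ω₀.integral (logKernel u)))) {f : ℝ → ℝ} (hf : Continuous f) :
    Tendsto (fun n => (ω n).integral f) atTop (𝓝 (ω₀.integral f)) := by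
  have hc := lt_add_one (ω₀.integral (logKernel 1))
  have h₀ := boundedBy_of_integral_logKernel_one_le hc.le
  have h := ((hF 1 zero_le_one).eventually (gt_mem_nhds hc)).mono fun n hn =>
    boundedBy_of_integral_logKernel_one_le (ω := ω n) hn.le
  refine tendsto_integral_of_tendsto_powKernel h₀ h (fun m => ?_) hf
  rcases m with _ | m
  · simpa only [powKernel_zero, integral_const, mul_one] using
      tendsto_mass h₀ h fun u hu => tendsto_integral_powKernel_succ hF 0 hu
  · exact tendsto_integral_powKernel_succ hF m one_pos

lemma tendstoUniformlyOn_polyaFun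
    (hF : ∀ u, 0 ≤ u → Tendsto (fun n => (ω n).integral (logKernel u)) atTop
      (𝓝 (ω₀.integral (logKernel u))))
    (hmass : Tendsto (fun n => (ω n).mass) atTop (𝓝 ω₀.mass)) {K : Set ℝ} (hK : IsCompact K) :
    TendstoUniformlyOn (fun n t => polyaFun (ω n).α (ω n).γ t) (polyaFun ω₀.α ω₀.γ) atTop K := by
  obtain ⟨B, hB⟩ := hmass.bddAbove_range
  refine hK.tendstoUniformlyOn_of_equicontinuousOn
    (Equicontinuous.equicontinuousOn (fun t₀ => ?_) K) fun t _ => ?_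
  · refine Metric.equicontinuousAt_of_continuity_modulus
      (fun t => B * |t₀ ^ 2 / 4 - t ^ 2 / 4|) ?_ _ (Eventually.of_forall fun t n => ?_)
    · convert (Continuous.tendsto (f := fun t : ℝ => B * |t₀ ^ 2 / 4 - t ^ 2 / 4|)
        (by fun_prop) t₀) using 2
      simp
    · exact (abs_polyaFun_sub_le _ _).trans
        (mul_le_mul_of_nonneg_right (hB (mem_range_self n)) (abs_nonneg _))
  · simp only [polyaFun_eq_exp]
    exact (hF _ (by positivity)).neg.rexp

end Convergence

/-- For a sequence of parameters `ω⁽ⁿ⁾ = (a n, g n)` and a parameter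
`ω = (α, γ)` (all with summable nonnegative sequences and nonnegative `γ`-part), the
following are equivalent:
(a) weak convergence of the measures `σ_{ω⁽ⁿ⁾}` to `σ_ω`, i.e. for every bounded continuous
`f`, `g n · f(0) + Σ_k (a n k) f(a n k) → γ f(0) + Σ_k α_k f(α_k)`;
(b) `Π(ω⁽ⁿ⁾,·) → Π(ω,·)` uniformly on every compact subset of `ℝ`. -/
theorem polya_topologies_equivalent
    (a : ℕ → ℕ → ℝ) (g : ℕ → ℝ) (α : ℕ → ℝ) (γ : ℝ)
    (ha : ∀ n, Summable (a n)) (han : ∀ n k, 0 ≤ a n k) (hg : ∀ n, 0 ≤ g n)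
    (hα : Summable α) (hαn : ∀ k, 0 ≤ α k) (hγ : 0 ≤ γ) :
    (∀ f : ℝ → ℝ, Continuous f → (∃ C : ℝ, ∀ x, |f x| ≤ C) →
        Tendsto (fun n => g n * f 0 + ∑' k, a n k * f (a n k)) atTop
          (nhds (γ * f 0 + ∑' k, α k * f (α k))))
      ↔ (∀ K : Set ℝ, IsCompact K →
          TendstoUniformlyOn (fun n t => polyaFun (a n) (g n) t) (polyaFun α γ) atTop K) := by
  let ω : ℕ → PolyaParam := fun n => ⟨a n, g n, ha n, han n, hg n⟩
  let ω₀ : PolyaParam := ⟨α, γ, hα, hαn, hγ⟩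
  change (∀ f : ℝ → ℝ, Continuous f → (∃ C : ℝ, ∀ x, |f x| ≤ C) →
      Tendsto (fun n => (ω n).integral f) atTop (𝓝 (ω₀.integral f))) ↔
    ∀ K : Set ℝ, IsCompact K →
      TendstoUniformlyOn (fun n t => polyaFun (ω n).α (ω n).γ t) (polyaFun ω₀.α ω₀.γ) atTop K
  constructor
  · intro hweak K hK
    have hmass := hweak (fun _ => 1) continuous_const ⟨1, fun _ => by simp⟩
    simp only [integral_const, mul_one] at hmass
    exact tendstoUniformlyOn_polyaFun (fun u hu => hweak _ (continuous_logKernel hu)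
      ⟨u, abs_logKernel_le hu⟩) hmass hK
  · intro hunif f hf _
    refine tendsto_integral_of_tendsto_integral_logKernel (fun u hu => ?_) hf
    simp only [integral_logKernel_eq_neg_log_polyaFun hu]
    exact ((hunif _ isCompact_singleton).tendsto_at rfl).log (polyaFun_pos _).ne' |>.neg
end

section
/- Let R ≥ 0 and let Ω_R be the set of parameters ω = (α, γ) with α = (α_j)_{j≥1} a summable sequence of nonnegative reals and γ ≥ 0 satisfying γ + Σ_{j=1}^∞ α_j ≤ R. Then Ω_R is compact in the following sense: every sequence (ω⁽ⁿ⁾) in Ω_R has a subsequence (ω⁽ⁿᵏ⁾) and a parameter ω ∈ Ω_R such that the finite measures σ_{ω⁽ⁿᵏ⁾} = γ⁽ⁿᵏ⁾δ₀ + Σ_j α_j⁽ⁿᵏ⁾ δ_{α_j⁽ⁿᵏ⁾} converge weakly on [0,∞) to σ_ω = γδ₀ + Σ_j α_j δ_{α_j}, i.e. ∫ f dσ_{ω⁽ⁿᵏ⁾} → ∫ f dσ_ω for every bounded continuous function f on [0,∞). -/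
/-!
Sort each sequence `α⁽ⁿ⁾` decreasingly; this changes neither `σ_{ω⁽ⁿ⁾}` nor the mass, and gives
`(j + 1) α⁽ⁿ⁾_j ≤ R`. By Tychonoff a subsequence converges coordinatewise to some `α`, and the
total masses converge to some `M ≤ R`. The atoms of index `≥ N` lie in `[0, R / (N + 1)]`
uniformly in `n`, so against `f - f 0` their contribution is uniformly small, while the finitely
many atoms of index `< N` converge. The mass `M - Σ_j α_j` lost in the limit has escaped to `0` and is recorded as `γ`.
-/

open Filter Topology

section Rearrangement

variable {a : ℕ → ℝ}

lemma exists_notMem_forall_notMem_le (ha : Tendsto a atTop (𝓝 0)) (ha0 : ∀ i, 0 ≤ a i)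
    (t : Finset ℕ) : ∃ i ∉ t, ∀ i' ∉ t, a i' ≤ a i := by
  by_cases hzero : ∀ i ∉ t, a i = 0
  · obtain ⟨i, hi⟩ := t.exists_notMem
    exact ⟨i, hi, fun i' hi' => by rw [hzero i' hi', hzero i hi]⟩
  push Not at hzero
  obtain ⟨i₀, hi₀t, hi₀⟩ := hzero
  have hlarge_finite : {i | i ∉ t ∧ a i₀ ≤ a i}.Finite := by
    have hsmall : ∀ᶠ i in cofinite, a i < a i₀ := by
      rw [Nat.cofinite_eq_atTop]
      exact ha.eventually_lt_const ((ha0 i₀).lt_of_ne' hi₀)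
    exact (eventually_cofinite.1 hsmall).subset fun i hi => not_lt.2 hi.2
  obtain ⟨i, ⟨hit, -⟩, hmax⟩ := Set.exists_max_image _ a hlarge_finite ⟨i₀, hi₀t, le_rfl⟩
  refine ⟨i, hit, fun i' hi' => ?_⟩
  rcases le_total (a i₀) (a i') with h | h
  · exact hmax i' ⟨hi', h⟩
  · exact h.trans (hmax i₀ ⟨hi₀t, le_rfl⟩)

/-- Greedy sorting: `e n` maximises `a` off `{e 0, …, e (n - 1)}`. -/
theorem exists_antitone_rearrangement (ha : Summable a) (ha0 : ∀ i, 0 ≤ a i) :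
    ∃ e : ℕ → ℕ, e.Injective ∧ Antitone (a ∘ e) ∧ Function.support a ⊆ Set.range e := by
  choose pick hpick_notMem hpick_max using
    exists_notMem_forall_notMem_le ha.tendsto_atTop_zero ha0
  let chosen : ℕ → Finset ℕ := fun n => Nat.rec ∅ (fun _ t => insert (pick t) t) n
  let e : ℕ → ℕ := fun n => pick (chosen n)
  have hchosen_mono : Monotone chosen :=
    monotone_nat_of_le_succ fun n => Finset.subset_insert _ _
  have hmem : ∀ {m n}, m < n → e m ∈ chosen n := fun h =>
    hchosen_mono (Nat.succ_le_of_lt h) (Finset.mem_insert_self _ _)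
  have hinj : e.Injective := by
    intro m n hmn
    by_contra hne
    rcases lt_or_gt_of_ne hne with h | h <;> exact hpick_notMem _ (hmn ▸ hmem h)
  refine ⟨e, hinj, fun m n hmn => hpick_max _ (e n) fun h => hpick_notMem _ (hchosen_mono hmn h),
    fun i hi => ?_⟩
  by_contra hi_range
  have hnever : ∀ n, i ∉ chosen n := by
    intro n
    induction n with
    | zero => exact Finset.notMem_empty i
    | succ n ih =>
      exact fun h => (Finset.mem_insert.1 h).elim (fun h => hi_range ⟨n, h.symm⟩) ih
  have hi_nonpos : a i ≤ 0 :=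
    ge_of_tendsto' (ha.comp_injective hinj).tendsto_atTop_zero fun n => hpick_max _ i (hnever n)
  exact hi (le_antisymm hi_nonpos (ha0 i))

lemma tsum_apply_comp_eq_of_support_subset {e : ℕ → ℕ} (he : e.Injective)
    (hsupp : Function.support a ⊆ Set.range e) {F : ℝ → ℝ} (hF : F 0 = 0) :
    ∑' j, F (a (e j)) = ∑' i, F (a i) :=
  he.tsum_eq (f := fun i => F (a i)) fun i hi => hsupp fun h => hi (by simp only [h, hF])

end Rearrangement

section Series

lemma Antitone.mul_le_tsum {c : ℕ → ℝ} (hanti : Antitone c) (hc : Summable c)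
    (hc0 : ∀ j, 0 ≤ c j) (j : ℕ) : (j + 1) * c j ≤ ∑' i, c i :=
  calc (j + 1 : ℝ) * c j = (Finset.range (j + 1)).card • c j := by simp [nsmul_eq_mul]
    _ ≤ ∑ i ∈ Finset.range (j + 1), c i := Finset.card_nsmul_le_sum _ _ _ fun i hi =>
        hanti (Nat.lt_succ_iff.1 (Finset.mem_range.1 hi))
    _ ≤ ∑' i, c i := Summable.sum_le_tsum _ (fun i _ => hc0 i) hc

lemma Summable.mul_of_abs_le {c d : ℕ → ℝ} (hc : Summable c) {C : ℝ} (hd : ∀ j, |d j| ≤ C) :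
    Summable fun j => c j * d j :=
  hc.abs.mul_right C |>.of_norm_bounded fun j => by
    rw [Real.norm_eq_abs, abs_mul]
    exact mul_le_mul_of_nonneg_left (hd j) (abs_nonneg _)

lemma abs_tsum_mul_le {c d : ℕ → ℝ} (hc : Summable c) (hc0 : ∀ j, 0 ≤ c j) {ε : ℝ}
    (hd : ∀ j, |d j| ≤ ε) : |∑' j, c j * d j| ≤ ε * ∑' j, c j := by
  rw [mul_comm, ← Real.norm_eq_abs]
  refine tsum_of_norm_bounded (hc.hasSum.mul_right ε) fun j => ?_
  rw [Real.norm_eq_abs, abs_mul, abs_of_nonneg (hc0 j)]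
  exact mul_le_mul_of_nonneg_left (hd j) (hc0 j)

/-- A sorted sequence of total mass `≤ R` has all its terms of index `≥ N` in `[0, R / (N + 1)]`. -/
lemma abs_tsum_tail_le {c : ℕ → ℝ} (hc : Summable c) (hc0 : ∀ j, 0 ≤ c j) (hanti : Antitone c)
    {R δ ε : ℝ} (hcR : ∑' j, c j ≤ R) (hε : 0 ≤ ε) {h : ℝ → ℝ}
    (hh : ∀ x, 0 ≤ x → x < δ → |h x| ≤ ε) {N : ℕ} (hN : R < (N + 1) * δ) :
    |∑' j, c (j + N) * h (c (j + N))| ≤ ε * R := by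
  have hcN : c N < δ :=
    lt_of_mul_lt_mul_left ((hanti.mul_le_tsum hc hc0 N).trans hcR |>.trans_lt hN) (by positivity)
  calc |∑' j, c (j + N) * h (c (j + N))| ≤ ε * ∑' j, c (j + N) :=
        abs_tsum_mul_le ((summable_nat_add_iff N).2 hc) (fun j => hc0 _) fun j =>
          hh _ (hc0 _) ((hanti (Nat.le_add_left N j)).trans_lt hcN)
    _ ≤ ε * R := mul_le_mul_of_nonneg_left
        ((tsum_comp_le_tsum_of_inj hc hc0 (add_left_injective N)).trans hcR) hε

theorem tendsto_tsum_of_tendsto_of_tail_le {ι E : Type*} [NormedAddCommGroup E] {l : Filter ι}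
    {u : ι → ℕ → E} {v : ℕ → E} (hu : ∀ k, Summable (u k)) (hv : Summable v)
    (hlim : ∀ j, Tendsto (fun k => u k j) l (𝓝 (v j)))
    (htail : ∀ ε > 0, ∃ N, (∀ k, ‖∑' j, u k (j + N)‖ ≤ ε) ∧ ‖∑' j, v (j + N)‖ ≤ ε) :
    Tendsto (fun k => ∑' j, u k j) l (𝓝 (∑' j, v j)) := by
  refine Metric.tendsto_nhds.2 fun ε hε => ?_
  obtain ⟨N, hu_tail, hv_tail⟩ := htail (ε / 3) (by positivity)
  have hhead := tendsto_finsetSum (Finset.range N) fun j _ => hlim j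
  filter_upwards [Metric.tendsto_nhds.1 hhead (ε / 3) (by positivity)] with k hk
  rw [← (hu k).sum_add_tsum_nat_add N, ← hv.sum_add_tsum_nat_add N]
  calc _ ≤ _ + _ := dist_add_add_le _ _ _ _
    _ ≤ _ + (‖∑' j, u k (j + N)‖ + ‖∑' j, v (j + N)‖) := by gcongr; exact dist_le_norm_add_norm _ _
    _ < ε := by linarith [hu_tail k]

/-- Fatou's lemma for series. -/
lemma summable_and_tsum_le_of_tendsto {ι : Type*} {l : Filter ι} [l.NeBot] {u : ι → ℕ → ℝ}
    {v : ℕ → ℝ} {s : ι → ℝ} {M : ℝ} (hv0 : ∀ j, 0 ≤ v j)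
    (hlim : ∀ j, Tendsto (fun k => u k j) l (𝓝 (v j))) (hs : Tendsto s l (𝓝 M))
    (hle : ∀ k N, ∑ j ∈ Finset.range N, u k j ≤ s k) : Summable v ∧ ∑' j, v j ≤ M := by
  have hpartial : ∀ N, ∑ j ∈ Finset.range N, v j ≤ M := fun N =>
    le_of_tendsto_of_tendsto' (tendsto_finsetSum _ fun j _ => hlim j) hs fun k => hle k N
  exact ⟨summable_of_sum_range_le hv0 hpartial, Real.tsum_le_of_sum_range_le hv0 hpartial⟩

end Series

section SigmaIntegral

noncomputable def sigmaIntegral (γ : ℝ) (α : ℕ → ℝ) (f : ℝ → ℝ) : ℝ :=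
  γ * f 0 + ∑' j, α j * f (α j)

lemma sigmaIntegral_comp_of_support_subset {α : ℕ → ℝ} {e : ℕ → ℕ} (he : e.Injective)
    (hsupp : Function.support α ⊆ Set.range e) (γ : ℝ) (f : ℝ → ℝ) :
    sigmaIntegral γ (α ∘ e) f = sigmaIntegral γ α f := by
  simp only [sigmaIntegral, Function.comp_apply,
    tsum_apply_comp_eq_of_support_subset he hsupp (F := fun x => x * f x) (zero_mul _)]

lemma sigmaIntegral_eq_add_tsum_sub {α : ℕ → ℝ} (hα : Summable α) {f : ℝ → ℝ} {C : ℝ}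
    (hC : ∀ x, |f x| ≤ C) (γ : ℝ) :
    sigmaIntegral γ α f = (γ + ∑' j, α j) * f 0 + ∑' j, α j * (f (α j) - f 0) := by
  have hsum : Summable fun j => α j * f (α j) := hα.mul_of_abs_le fun j => hC _
  simp only [sigmaIntegral, mul_sub, hsum.tsum_sub (hα.mul_right (f 0)), hα.tsum_mul_right]
  ring

theorem tendsto_sigmaIntegral {ι : Type*} {l : Filter ι} [l.NeBot] {R M : ℝ} (hR : 0 ≤ R)
    {b : ι → ℕ → ℝ} {g : ι → ℝ} {β : ℕ → ℝ} (hb : ∀ k, Summable (b k))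
    (hb0 : ∀ k j, 0 ≤ b k j) (hanti : ∀ k, Antitone (b k)) (hbR : ∀ k, ∑' j, b k j ≤ R)
    (hβ : ∀ j, Tendsto (fun k => b k j) l (𝓝 (β j)))
    (hM : Tendsto (fun k => g k + ∑' j, b k j) l (𝓝 M))
    {f : ℝ → ℝ} (hf : Continuous f) {C : ℝ} (hC : ∀ x, |f x| ≤ C) :
    Tendsto (fun k => sigmaIntegral (g k) (b k) f) l (𝓝 (sigmaIntegral (M - ∑' j, β j) β f)) := by
  have hβ0 : ∀ j, 0 ≤ β j := fun j => ge_of_tendsto' (hβ j) fun k => hb0 k j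
  have hβanti : Antitone β := fun i j hij =>
    le_of_tendsto_of_tendsto' (hβ j) (hβ i) fun k => hanti k hij
  obtain ⟨hβs, hβR⟩ := summable_and_tsum_le_of_tendsto hβ0 hβ tendsto_const_nhds fun k N =>
    (Summable.sum_le_tsum _ (fun j _ => hb0 k j) (hb k)).trans (hbR k)
  set h : ℝ → ℝ := fun x => f x - f 0
  have hh : ∀ x, |h x| ≤ 2 * C := fun x => (abs_sub _ _).trans (by linarith [hC x, hC 0])
  simp only [sigmaIntegral_eq_add_tsum_sub (hb _) hC, sigmaIntegral_eq_add_tsum_sub hβs hC,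
    sub_add_cancel]
  refine (hM.mul_const (f 0)).add (tendsto_tsum_of_tendsto_of_tail_le
    (fun k => (hb k).mul_of_abs_le fun j => hh _) (hβs.mul_of_abs_le fun j => hh _)
    (fun j => ((continuous_id.mul (hf.sub continuous_const)).tendsto _).comp (hβ j))
    fun ε hε => ?_)
  obtain ⟨δ, hδ, hδh⟩ :=
    Metric.continuousAt_iff.1 hf.continuousAt (ε / (R + 1)) (by positivity)
  have hh_small : ∀ x, 0 ≤ x → x < δ → |h x| ≤ ε / (R + 1) := fun x hx hxδ =>
    (hδh (by rwa [Real.dist_eq, sub_zero, abs_of_nonneg hx])).le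
  obtain ⟨N, hN⟩ := exists_nat_gt (R / δ)
  have hNδ : R < (N + 1) * δ := by
    rw [div_lt_iff₀ hδ] at hN
    nlinarith
  have hεR : ε / (R + 1) * R ≤ ε := by
    rw [div_mul_eq_mul_div, div_le_iff₀ (by positivity)]
    nlinarith
  exact ⟨N, fun k => (abs_tsum_tail_le (hb k) (hb0 k) (hanti k) (hbR k) (by positivity)
      hh_small hNδ).trans hεR,
    (abs_tsum_tail_le hβs hβ0 hβanti hβR (by positivity) hh_small hNδ).trans hεR⟩

end SigmaIntegral

lemma exists_subseq_tendsto_of_mem {K : Set ℝ} (hK : IsCompact K) {b : ℕ → ℕ → ℝ} {m : ℕ → ℝ}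
    (hb : ∀ n j, b n j ∈ K) (hm : ∀ n, m n ∈ K) :
    ∃ φ : ℕ → ℕ, StrictMono φ ∧ ∃ β : ℕ → ℝ, (∀ j, β j ∈ K) ∧ ∃ M ∈ K,
      (∀ j, Tendsto (fun k => b (φ k) j) atTop (𝓝 (β j))) ∧ Tendsto (m ∘ φ) atTop (𝓝 M) := by
  obtain ⟨⟨β, M⟩, ⟨hβK, hMK⟩, φ, hφ, hlim⟩ :=
    ((isCompact_univ_pi fun _ : ℕ => hK).prod hK).tendsto_subseq (x := fun n => (b n, m n))
      fun n => ⟨fun j _ => hb n j, hm n⟩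
  exact ⟨φ, hφ, β, fun j => hβK j trivial, M, hMK,
    tendsto_pi_nhds.1 ((continuous_fst.tendsto _).comp hlim), (continuous_snd.tendsto _).comp hlim⟩

/-- For `R ≥ 0`, the set `Ω_R` of parameters `ω = (α,γ)` (with `α` a summable
sequence of nonnegative reals, `γ ≥ 0`) satisfying `γ + Σ_j α_j ≤ R` is sequentially compact
for the weak topology of the associated measures `σ_ω = γδ₀ + Σ_j α_j δ_{α_j}`: every sequence
in `Ω_R` has a subsequence whose associated measures converge weakly to `σ_ω` for some
`ω ∈ Ω_R`. -/
theorem polya_parameter_ball_compact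
    (R : ℝ) (hR : 0 ≤ R) (a : ℕ → ℕ → ℝ) (g : ℕ → ℝ)
    (ha : ∀ n, Summable (a n)) (han : ∀ n k, 0 ≤ a n k) (hg : ∀ n, 0 ≤ g n)
    (hbound : ∀ n, g n + ∑' k, a n k ≤ R) :
    ∃ φ : ℕ → ℕ, StrictMono φ ∧
      ∃ (α : ℕ → ℝ) (γ : ℝ), Summable α ∧ (∀ k, 0 ≤ α k) ∧ 0 ≤ γ ∧
        γ + ∑' k, α k ≤ R ∧
        ∀ f : ℝ → ℝ, Continuous f → (∃ C : ℝ, ∀ x, |f x| ≤ C) →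
          Tendsto (fun k => g (φ k) * f 0 + ∑' j, a (φ k) j * f (a (φ k) j)) atTop
            (nhds (γ * f 0 + ∑' j, α j * f (α j))) := by
  choose e he_inj he_anti he_supp using fun n => exists_antitone_rearrangement (ha n) (han n)
  set b : ℕ → ℕ → ℝ := fun n => a n ∘ e n
  have hb : ∀ n, Summable (b n) := fun n => (ha n).comp_injective (he_inj n)
  have hb_tsum : ∀ n, ∑' j, b n j = ∑' i, a n i := fun n =>
    tsum_apply_comp_eq_of_support_subset (he_inj n) (he_supp n) (F := id) rfl
  have hbR : ∀ n, ∑' j, b n j ≤ R := fun n => by linarith [hbound n, hg n, hb_tsum n]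
  obtain ⟨φ, hφ, β, hβ_mem, M, hM_mem, hβ, hM⟩ := exists_subseq_tendsto_of_mem isCompact_Icc
    (m := fun n => g n + ∑' j, b n j)
    (fun n j => ⟨han _ _, ((hb n).le_tsum j fun i _ => han _ _).trans (hbR n)⟩)
    (fun n => ⟨add_nonneg (hg n) (tsum_nonneg fun j => han _ _), (hb_tsum n).symm ▸ hbound n⟩)
  obtain ⟨hβs, hβM⟩ := summable_and_tsum_le_of_tendsto (fun j => (hβ_mem j).1) hβ hM
    fun k N => (Summable.sum_le_tsum _ (fun j _ => han _ _) (hb _)).trans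
      (le_add_of_nonneg_left (hg (φ k)))
  refine ⟨φ, hφ, β, M - ∑' j, β j, hβs, fun j => (hβ_mem j).1, sub_nonneg.2 hβM,
    by linarith [hM_mem.2], ?_⟩
  rintro f hf ⟨C, hC⟩
  exact (tendsto_sigmaIntegral hR (fun k => hb _) (fun k j => han _ _) (fun k => he_anti _)
    (fun k => hbR _) hβ hM hf hC).congr fun k =>
      sigmaIntegral_comp_of_support_subset (he_inj _) (he_supp _) _ _
end

section
/- For each n ≥ 1 let λ⁽ⁿ⁾ = (λ₁⁽ⁿ⁾, …, λₙ⁽ⁿ⁾) ∈ ℝⁿ, and let ω = (α, γ) with α = (α_k)_{k≥1} a summable sequence of nonnegative reals and γ ≥ 0. Assume that T_n(λ⁽ⁿ⁾) converges to ω, i.e. for every bounded continuous function f on ℝ, lim_{n→∞} Σ_{k=1}^n (λ_k⁽ⁿ⁾/n)² f((λ_k⁽ⁿ⁾/n)²) = γ f(0) + Σ_{k=1}^∞ α_k f(α_k). Then for every integer m ≥ 2, lim_{n→∞} (1/n^{2m}) Σ_{k=1}^n (λ_k⁽ⁿ⁾)^{2m} = Σ_{k=1}^∞ α_k^m. -/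
/-!
Test the convergence hypothesis against `x ↦ x^(m-1)` truncated to `[0, M]`, which is bounded and
continuous. Testing against `1` shows the total mass converges to `γ + Σ α`, so for `M` above it all
atoms `(λ_k/n)²` eventually lie in `[0, M]`, as do the `α_k`. There the truncation is exact, so the
tested sums are the moments `Σ ((λ_k/n)²)^m`, the atom at `0` contributes `γ · 0^(m-1) = 0` since
`m ≥ 2`, and the limit is `Σ α_k^m`.
-/

open Filter Topology

noncomputable def truncPow (M : ℝ) (j : ℕ) (x : ℝ) : ℝ := min (max x 0) M ^ j

section truncPow

variable {M : ℝ} {j : ℕ}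

theorem continuous_truncPow : Continuous (truncPow M j) :=
  ((continuous_id.max continuous_const).min continuous_const).pow j

theorem abs_truncPow_le (hM : 0 ≤ M) (x : ℝ) : |truncPow M j x| ≤ M ^ j := by
  have h0 : 0 ≤ min (max x 0) M := le_min (le_max_right x 0) hM
  rw [truncPow, abs_of_nonneg (pow_nonneg h0 j)]
  exact pow_le_pow_left₀ h0 (min_le_right _ _) j

theorem truncPow_of_mem_Icc {x : ℝ} (hx : x ∈ Set.Icc 0 M) : truncPow M j x = x ^ j := by
  rw [truncPow, max_eq_left hx.1, min_eq_left hx.2]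

theorem mul_truncPow_pred_of_mem_Icc {m : ℕ} (hm : m ≠ 0) {x : ℝ} (hx : x ∈ Set.Icc 0 M) :
    x * truncPow M (m - 1) x = x ^ m := by
  rw [truncPow_of_mem_Icc hx, mul_pow_sub_one hm]

end truncPow

theorem eventually_forall_mem_Icc_of_tendsto_sum {β : Type*} {l : Filter β} {ι : β → Type*}
    [∀ b, Fintype (ι b)] {w : (b : β) → ι b → ℝ} (hw : ∀ b k, 0 ≤ w b k) {s M : ℝ}
    (hs : Tendsto (fun b => ∑ k, w b k) l (𝓝 s)) (hsM : s < M) :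
    ∀ᶠ b in l, ∀ k, w b k ∈ Set.Icc 0 M := by
  filter_upwards [hs.eventually_lt_const hsM] with b hb k
  exact ⟨hw b k, (Finset.single_le_sum (fun j _ => hw b j) (Finset.mem_univ k)).trans hb.le⟩

/-- For each `n ≥ 1` let `λ⁽ⁿ⁾ ∈ ℝⁿ` and suppose `T_n(λ⁽ⁿ⁾) → ω = (α,γ)`,
i.e. for every bounded continuous `f` on `ℝ`,
`Σ_{k=1}^n (λ_k⁽ⁿ⁾/n)² f((λ_k⁽ⁿ⁾/n)²) → γ f(0) + Σ_k α_k f(α_k)`. Then for every `m ≥ 2`,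
`(1/n^{2m}) Σ_{k=1}^n (λ_k⁽ⁿ⁾)^{2m} → Σ_k α_k^m`. -/
theorem moment_convergence_pm
    (L : (n : ℕ) → Fin n → ℝ) (α : ℕ → ℝ) (γ : ℝ)
    (hα : Summable α) (hαn : ∀ k, 0 ≤ α k) (hγ : 0 ≤ γ)
    (hconv : ∀ f : ℝ → ℝ, Continuous f → (∃ C : ℝ, ∀ x, |f x| ≤ C) →
      Tendsto (fun n : ℕ => ∑ k : Fin n, (L n k / n) ^ 2 * f ((L n k / n) ^ 2)) atTop
        (nhds (γ * f 0 + ∑' k, α k * f (α k))))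
    (m : ℕ) (hm : 2 ≤ m) :
    Tendsto (fun n : ℕ => (1 / (n : ℝ) ^ (2 * m)) * ∑ k : Fin n, (L n k) ^ (2 * m)) atTop
      (nhds (∑' k, α k ^ m)) := by
  set M := γ + ∑' k, α k + 1
  have hα_mem : ∀ k, α k ∈ Set.Icc 0 M := fun k =>
    ⟨hαn k, by linarith [hα.le_tsum k fun j _ => hαn j]⟩
  have hM : 0 ≤ M := (hα_mem 0).1.trans (hα_mem 0).2
  have hmass : Tendsto (fun n : ℕ => ∑ k : Fin n, (L n k / n) ^ 2) atTop
      (𝓝 (γ + ∑' k, α k)) := by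
    simpa using hconv (fun _ => 1) continuous_const ⟨1, by simp⟩
  have hatoms := eventually_forall_mem_Icc_of_tendsto_sum (fun n k => sq_nonneg (L n k / n))
    hmass (lt_add_one _)
  have hmoment := hconv (truncPow M (m - 1)) continuous_truncPow ⟨_, abs_truncPow_le hM⟩
  rw [truncPow_of_mem_Icc ⟨le_rfl, hM⟩, zero_pow (by omega), mul_zero, zero_add,
    tsum_congr fun k => mul_truncPow_pred_of_mem_Icc (by omega) (hα_mem k)] at hmoment
  refine hmoment.congr' ?_
  filter_upwards [hatoms] with n hn
  rw [Finset.mul_sum]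
  refine Finset.sum_congr rfl fun k _ => ?_
  rw [mul_truncPow_pred_of_mem_Icc (by omega) (hn k), ← pow_mul, div_pow, mul_comm 2 m, one_div,
    inv_mul_eq_div]
end
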